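/- arXiv:1710.03668 — 4 statements merged into one kernel-verified Lean document; each statement's English description precedes it below -/
import Mathlib

section
/- Let φ : [1,∞) → (0,∞) be an RO-varying function. Then there exist Borel measurable functions β, γ : [1,∞) → ℝ, both bounded on [1,∞), such that φ(t) = exp( β(t) + ∫₁^t γ(τ)/τ dτ ) for every t ≥ 1. -/
/-- A Borel measurable function `φ : [1,∞) → (0,∞)` is RO-varying if there exist
`a > 1` and `c ≥ 1` with `c⁻¹ ≤ φ(λt)/φ(t) ≤ c` for all `t ≥ 1`, `λ ∈ [1,a]`. -/
def IsRO (φ : ℝ → ℝ) : Prop :=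
  Measurable φ ∧ (∀ t, 1 ≤ t → 0 < φ t) ∧
    ∃ a > (1 : ℝ), ∃ c ≥ (1 : ℝ), ∀ t, 1 ≤ t → ∀ l, 1 ≤ l → l ≤ a →
      c⁻¹ ≤ φ (l * t) / φ t ∧ φ (l * t) / φ t ≤ c

/-- measurable + bounded on the interval implies interval integrable. -/
lemma II_of_bdd {f : ℝ → ℝ} (hf : Measurable f) (x y M : ℝ)
    (h : ∀ s ∈ Set.uIcc x y, |f s| ≤ M) : IntervalIntegrable f MeasureTheory.volume x y := by
  rw [intervalIntegrable_iff]
  apply MeasureTheory.Measure.integrableOn_of_bounded (M := M)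
  · rw [Set.uIoc]; exact measure_Ioc_lt_top.ne
  · exact hf.aestronglyMeasurable
  · refine (MeasureTheory.ae_restrict_iff' measurableSet_uIoc).2 ?_
    exact MeasureTheory.ae_of_all _ fun s hs => h s (Set.uIoc_subset_uIcc hs)

/-- every RO-varying function admits the integral representation
`φ(t) = exp(β(t) + ∫₁^t γ(τ)/τ dτ)` with `β, γ` Borel measurable and bounded on `[1,∞)`. -/
theorem ro_integral_representation (φ : ℝ → ℝ) (hφ : IsRO φ) :
    ∃ β γ : ℝ → ℝ, Measurable β ∧ Measurable γ ∧
      (∃ M : ℝ, ∀ t, 1 ≤ t → |β t| ≤ M) ∧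
      (∃ M : ℝ, ∀ t, 1 ≤ t → |γ t| ≤ M) ∧
      ∀ t, 1 ≤ t → φ t = Real.exp (β t + ∫ τ in (1:ℝ)..t, γ τ / τ) := by
  obtain ⟨hφm, hφpos, a, ha, c, hc, hro⟩ := hφ
  have ha0 : (0:ℝ) < a := lt_trans one_pos ha
  set L : ℝ → ℝ := fun t => Real.log (φ t) with hLdef
  have hLm : Measurable L := Real.measurable_log.comp hφm
  set d := Real.log a with hddef
  have hd0 : 0 < d := Real.log_pos ha
  set C := Real.log c with hCdef
  have hC0 : 0 ≤ C := Real.log_nonneg hc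
  -- key estimate
  have key : ∀ s, 1 ≤ s → ∀ l, 1 ≤ l → l ≤ a → |L (l * s) - L s| ≤ C := by
    intro s hs l hl hla
    obtain ⟨h1, h2⟩ := hro s hs l hl hla
    have hs' : 0 < φ s := hφpos s hs
    have hls : 0 < φ (l * s) := hφpos _ (by nlinarith)
    have hlog : L (l * s) - L s = Real.log (φ (l * s) / φ s) := by
      rw [hLdef]; exact (Real.log_div hls.ne' hs'.ne').symm
    rw [abs_le, hlog]
    have hu := Real.log_le_log (by positivity) h2
    have hlo := Real.log_le_log (by positivity) h1
    rw [Real.log_inv] at hlo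
    exact ⟨by linarith, hu⟩
  -- local boundedness of L
  have locbound : ∀ n : ℕ, ∀ t, 1 ≤ t → t ≤ a ^ n → |L t - L 1| ≤ C * n := by
    intro n
    induction n with
    | zero =>
      intro t ht ht'
      simp only [pow_zero] at ht'
      have : t = 1 := le_antisymm ht' ht
      simp [this]
    | succ n ih =>
      intro t ht ht'
      by_cases hcase : t ≤ a ^ n
      · have h1 := ih t ht hcase
        have h2 : C * (n:ℝ) ≤ C * ((n:ℝ) + 1) := by
          apply mul_le_mul_of_nonneg_left _ hC0
          linarith
        push_cast at h2 ⊢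
        linarith
      · push_neg at hcase
        set s := max (t / a) 1 with hsdef
        have hs1 : 1 ≤ s := le_max_right _ _
        have hsn : s ≤ a ^ n := by
          apply max_le _ (one_le_pow₀ (le_of_lt ha))
          rw [div_le_iff₀ ha0]
          calc t ≤ a ^ (n + 1) := ht'
            _ = a ^ n * a := by ring
        have hts : t = min a t * s := by
          rcases le_total t a with h | h
          · have h' : t / a ≤ 1 := by rw [div_le_one ha0]; exact h
            rw [hsdef, min_eq_right h, max_eq_right h', mul_one]
          · have h1a : 1 ≤ t / a := by rw [le_div_iff₀ ha0]; linarith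
            rw [hsdef, min_eq_left h, max_eq_left h1a, mul_div_cancel₀ _ (ne_of_gt ha0)]
        have hl1 : 1 ≤ min a t := le_min (le_of_lt ha) ht
        have hla : min a t ≤ a := min_le_left _ _
        have hkey := key s hs1 (min a t) hl1 hla
        rw [← hts] at hkey
        have hsn' := ih s hs1 hsn
        calc |L t - L 1| ≤ |L t - L s| + |L s - L 1| := abs_sub_le _ _ _
          _ ≤ C + C * n := add_le_add hkey hsn'
          _ = C * ((n : ℕ) + 1 : ℕ) := by push_cast; ring
  -- L is bounded on [1, T]
  have Lbdd : ∀ T : ℝ, ∃ B, 0 ≤ B ∧ ∀ t, 1 ≤ t → t ≤ T → |L t| ≤ B := by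
    intro T
    obtain ⟨n, hn⟩ := pow_unbounded_of_one_lt T ha
    refine ⟨|L 1| + C * n, by positivity, fun t ht htT => ?_⟩
    have h := locbound n t ht (le_trans htT (le_of_lt hn))
    calc |L t| ≤ |L t - L 1| + |L 1| := by
          simpa using abs_add_le (L t - L 1) (L 1)
      _ ≤ |L 1| + C * n := by linarith
  -- f := L σ / σ
  set f : ℝ → ℝ := fun σ => L σ / σ with hfdef
  have hfm : Measurable f := hLm.div measurable_id
  have hfint : ∀ x y : ℝ, 1 ≤ x → 1 ≤ y → IntervalIntegrable f MeasureTheory.volume x y := by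
    intro x y hx hy
    obtain ⟨B, hB0, hB⟩ := Lbdd (max x y)
    refine II_of_bdd hfm x y B fun s hs => ?_
    rw [Set.uIcc_eq_union] at hs
    have hs1 : 1 ≤ s := by rcases hs with h | h
                           exacts [le_trans hx h.1, le_trans hy h.1]
    have hs2 : s ≤ max x y := by rcases hs with h | h
                                 exacts [le_trans h.2 (le_max_right _ _),
                                   le_trans h.2 (le_max_left _ _)]
    have hspos : 0 < s := lt_of_lt_of_le one_pos hs1
    calc |f s| = |L s| / s := by rw [hfdef, abs_div, abs_of_pos hspos]
      _ ≤ |L s| := div_le_self (abs_nonneg _) hs1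
      _ ≤ B := hB s hs1 hs2
  -- gamma
  set γ : ℝ → ℝ := fun τ => if 1 ≤ τ then (L (a * τ) - L τ) / d else 0 with hγdef
  have hγm : Measurable γ := by
    apply Measurable.ite measurableSet_Ici _ measurable_const
    exact ((hLm.comp (measurable_const.mul measurable_id)).sub hLm).div measurable_const
  have hγbdd : ∀ τ, |γ τ| ≤ C / d := by
    intro τ
    rw [hγdef]
    by_cases h : 1 ≤ τ
    · simp only [h, if_true, abs_div, abs_of_pos hd0]
      gcongr
      exact key τ h a (le_of_lt ha) le_rfl
    · simp only [h, if_false, abs_zero]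
      positivity
  -- integrand g
  set g : ℝ → ℝ := fun τ => γ τ / τ with hgdef
  have hgm : Measurable g := hγm.div measurable_id
  have hgbdd : ∀ τ, |g τ| ≤ C / d := by
    intro τ
    simp only [hgdef]
    by_cases h : 1 ≤ τ
    · have hτ : 0 < τ := lt_of_lt_of_le one_pos h
      calc |γ τ / τ| = |γ τ| / τ := by rw [abs_div, abs_of_pos hτ]
        _ ≤ |γ τ| := div_le_self (abs_nonneg _) h
        _ ≤ C / d := hγbdd τ
    · have hz : γ τ = 0 := by rw [hγdef]; simp [h]
      rw [hz]
      simp only [zero_div, abs_zero]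
      positivity
  have hgint : ∀ x y : ℝ, IntervalIntegrable g MeasureTheory.volume x y :=
    fun x y => II_of_bdd hgm x y (C / d) fun s _ => hgbdd s
  -- beta
  set β : ℝ → ℝ := fun t => L t - ∫ τ in (1:ℝ)..t, g τ with hβdef
  have hβm : Measurable β :=
    hLm.sub (intervalIntegral.continuous_primitive hgint 1).measurable
  refine ⟨β, γ, hβm, hγm, ?_, ⟨C / d, fun t _ => hγbdd t⟩, fun t ht => ?_⟩
  · -- boundedness of β
    set K := ∫ σ in (1:ℝ)..a, f σ with hKdef
    refine ⟨C + |K| / d, fun t ht => ?_⟩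
    have ht0 : 0 < t := lt_of_lt_of_le one_pos ht
    have hat : 1 ≤ a * t := by nlinarith
    have htat : t ≤ a * t := le_mul_of_one_le_left (le_of_lt ht0) (le_of_lt ha)
    have hcomp : IntervalIntegrable (fun τ => a * f (a * τ)) MeasureTheory.volume 1 t := by
      obtain ⟨B, hB0, hB⟩ := Lbdd (a * t)
      refine II_of_bdd (f := fun τ => a * f (a * τ)) (by fun_prop) 1 t (a * B) fun s hs => ?_
      rw [Set.uIcc_of_le ht] at hs
      have h1 : 1 ≤ a * s := by nlinarith [hs.1]
      have h2 : a * s ≤ a * t := by nlinarith [hs.2]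
      have hfa : |f (a * s)| ≤ B := by
        calc |f (a * s)| = |L (a * s)| / (a * s) := by
              rw [hfdef, abs_div, abs_of_pos (by linarith : (0:ℝ) < a * s)]
          _ ≤ |L (a * s)| := div_le_self (abs_nonneg _) h1
          _ ≤ B := hB (a * s) h1 h2
      rw [abs_mul, abs_of_pos ha0]
      gcongr
    -- Step 1
    have step1 : (∫ τ in (1:ℝ)..t, g τ)
        = d⁻¹ * ((∫ τ in (1:ℝ)..t, a * f (a * τ)) - ∫ τ in (1:ℝ)..t, f τ) := by
      rw [← intervalIntegral.integral_sub hcomp (hfint 1 t le_rfl ht),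
          ← intervalIntegral.integral_const_mul]
      apply intervalIntegral.integral_congr
      intro τ hτ
      rw [Set.uIcc_of_le ht] at hτ
      have hτ1 : 1 ≤ τ := hτ.1
      have hτ0 : (0:ℝ) < τ := lt_of_lt_of_le one_pos hτ1
      simp only [hgdef, hγdef, hfdef, hτ1, if_true]
      have hτne : τ ≠ 0 := ne_of_gt hτ0
      have hane : a ≠ 0 := ne_of_gt ha0
      have hdne : d ≠ 0 := ne_of_gt hd0
      field_simp
    have step1' : (∫ τ in (1:ℝ)..t, a * f (a * τ)) = ∫ σ in a..(a * t), f σ := by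
      rw [intervalIntegral.integral_const_mul,
        intervalIntegral.integral_comp_mul_left f (ne_of_gt ha0), mul_one, smul_eq_mul,
        ← mul_assoc, mul_inv_cancel₀ (ne_of_gt ha0), one_mul]
    -- Step 2
    have i1 : IntervalIntegrable f MeasureTheory.volume 1 t := hfint 1 t le_rfl ht
    have i2 : IntervalIntegrable f MeasureTheory.volume t (a * t) := hfint t (a * t) ht hat
    have i3 : IntervalIntegrable f MeasureTheory.volume 1 a := hfint 1 a le_rfl (le_of_lt ha)
    have i4 : IntervalIntegrable f MeasureTheory.volume a (a * t) :=
      hfint a (a * t) (le_of_lt ha) hat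
    have step2 : (∫ σ in a..(a * t), f σ) - (∫ τ in (1:ℝ)..t, f τ)
        = (∫ σ in t..(a * t), f σ) - K := by
      have e1 := intervalIntegral.integral_add_adjacent_intervals i1 i2
      have e2 := intervalIntegral.integral_add_adjacent_intervals i3 i4
      rw [hKdef]; linarith
    -- one over sigma integral
    have h0not : (0:ℝ) ∉ Set.uIcc t (a * t) := by
      rw [Set.uIcc_of_le htat]
      intro h
      exact absurd h.1 (not_le.2 ht0)
    have hint1div : (∫ σ in t..(a * t), (1:ℝ) / σ) = d := by
      rw [integral_one_div h0not, mul_div_assoc, div_self (ne_of_gt ht0), mul_one]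
    have hone : IntervalIntegrable (fun σ : ℝ => C * (1 / σ)) MeasureTheory.volume t (a * t) := by
      apply IntervalIntegrable.const_mul
      exact intervalIntegral.intervalIntegrable_one_div (fun x hx => by
        rw [Set.uIcc_of_le htat] at hx; exact ne_of_gt (lt_of_lt_of_le ht0 hx.1))
        continuousOn_id
    have hLtdiv : IntervalIntegrable (fun σ : ℝ => L t * (1 / σ))
        MeasureTheory.volume t (a * t) := by
      apply IntervalIntegrable.const_mul
      exact intervalIntegral.intervalIntegrable_one_div (fun x hx => by
        rw [Set.uIcc_of_le htat] at hx; exact ne_of_gt (lt_of_lt_of_le ht0 hx.1))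
        continuousOn_id
    -- Step 3
    have step3 : (∫ σ in t..(a * t), f σ)
        = (∫ σ in t..(a * t), (L σ - L t) / σ) + L t * d := by
      have heq : (∫ σ in t..(a * t), (L σ - L t) / σ)
          = (∫ σ in t..(a * t), f σ) - ∫ σ in t..(a * t), L t * (1 / σ) := by
        rw [← intervalIntegral.integral_sub i2 hLtdiv]
        apply intervalIntegral.integral_congr
        intro σ _
        simp only [hfdef]
        ring
      rw [heq, intervalIntegral.integral_const_mul, hint1div]
      ring
    -- Step 4
    have step4 : |∫ σ in t..(a * t), (L σ - L t) / σ| ≤ C * d := by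
      have hb : ∀ᵐ σ ∂(MeasureTheory.volume.restrict (Set.uIoc t (a * t))),
          ‖(L σ - L t) / σ‖ ≤ C * (1 / σ) := by
        refine (MeasureTheory.ae_restrict_iff' measurableSet_uIoc).2
          (MeasureTheory.ae_of_all _ fun σ hσ => ?_)
        rw [Set.uIoc_of_le htat] at hσ
        have hσt : t < σ := hσ.1
        have hσa : σ ≤ a * t := hσ.2
        have hσ0 : 0 < σ := lt_trans ht0 hσt
        have hl1 : 1 ≤ σ / t := (one_le_div ht0).2 (le_of_lt hσt)
        have hla : σ / t ≤ a := by rw [div_le_iff₀ ht0]; linarith [mul_comm a t]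
        have hk := key t ht (σ / t) hl1 hla
        rw [div_mul_cancel₀ _ (ne_of_gt ht0)] at hk
        rw [Real.norm_eq_abs, abs_div, abs_of_pos hσ0, div_eq_mul_one_div,
          mul_comm C (1 / σ), mul_comm (|L σ - L t|) (1 / σ)]
        exact mul_le_mul_of_nonneg_left hk (by positivity)
      calc |∫ σ in t..(a * t), (L σ - L t) / σ|
          ≤ |∫ σ in t..(a * t), C * (1 / σ)| := by
            simpa [Real.norm_eq_abs] using
              intervalIntegral.norm_integral_le_abs_of_norm_le hb hone
        _ = C * d := by
            rw [intervalIntegral.integral_const_mul, hint1div,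
              abs_of_nonneg (by positivity)]
    -- assemble
    show |L t - ∫ τ in (1:ℝ)..t, g τ| ≤ C + |K| / d
    rw [step1, step1', step2, step3]
    set E := ∫ σ in t..(a * t), (L σ - L t) / σ with hEdef
    have hrw : L t - d⁻¹ * (E + L t * d - K) = d⁻¹ * (K - E) := by
      field_simp
      ring
    rw [hrw, abs_mul, abs_of_pos (inv_pos.2 hd0)]
    calc d⁻¹ * |K - E| ≤ d⁻¹ * (|K| + C * d) := by
          apply mul_le_mul_of_nonneg_left _ (le_of_lt (inv_pos.2 hd0))
          calc |K - E| ≤ |K| + |E| := abs_sub _ _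
            _ ≤ |K| + C * d := by linarith [step4]
      _ = C + |K| / d := by field_simp; ring
  · -- the representation
    have hpos : 0 < φ t := hφpos t ht
    have hsum : β t + (∫ τ in (1:ℝ)..t, γ τ / τ) = L t := by
      show (L t - ∫ τ in (1:ℝ)..t, g τ) + (∫ τ in (1:ℝ)..t, g τ) = L t
      ring
    rw [hsum]
    exact (Real.exp_log hpos).symm
end

section
/- Fix an integer n ≥ 1 and let φ, φ₁ : [1,∞) → (0,∞) be RO-varying functions. Then the following are equivalent: (i) the function t ↦ φ(t)/φ₁(t) is bounded on [1,∞); (ii) there exists C > 0 such that for every Lebesgue measurable function g : ℝⁿ → ℂ one has ∫_{ℝⁿ} φ(⟨ξ⟩)² |g(ξ)|² dξ ≤ C · ∫_{ℝⁿ} φ₁(⟨ξ⟩)² |g(ξ)|² dξ; (iii) every Lebesgue measurable g : ℝⁿ → ℂ with ∫_{ℝⁿ} φ₁(⟨ξ⟩)² |g(ξ)|² dξ < ∞ also satisfies ∫_{ℝⁿ} φ(⟨ξ⟩)² |g(ξ)|² dξ < ∞. -/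
open MeasureTheory
open Set

/-- The smoothed modulus `⟨ξ⟩ = (1 + |ξ|²)^{1/2}`. -/
noncomputable def smod {n : ℕ} (ξ : EuclideanSpace ℝ (Fin n)) : ℝ :=
  Real.sqrt (1 + ‖ξ‖ ^ 2)


lemma one_le_smod {n : ℕ} (ξ : EuclideanSpace ℝ (Fin n)) : 1 ≤ smod ξ := by
  have h := Real.sq_sqrt (show (0:ℝ) ≤ 1 + ‖ξ‖^2 by positivity)
  have h2 := Real.sqrt_nonneg (1 + ‖ξ‖^2)
  rw [smod]; nlinarith [sq_nonneg ‖ξ‖]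

lemma norm_le_smod {n : ℕ} (ξ : EuclideanSpace ℝ (Fin n)) : ‖ξ‖ ≤ smod ξ := by
  rw [smod]
  calc ‖ξ‖ = Real.sqrt (‖ξ‖^2) := (Real.sqrt_sq (norm_nonneg _)).symm
    _ ≤ Real.sqrt (1 + ‖ξ‖^2) := Real.sqrt_le_sqrt (by linarith)

lemma continuous_smod {n : ℕ} : Continuous (smod (n := n)) := by
  unfold smod; fun_prop

lemma measurable_smod {n : ℕ} : Measurable (smod (n := n)) := continuous_smod.measurable

/-- sandwich on a multiplicative interval -/
lemma ro_sandwich {φ : ℝ → ℝ} {a c : ℝ} (hpos : ∀ t, 1 ≤ t → 0 < φ t)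
    (hc : 1 ≤ c)
    (hspec : ∀ t, 1 ≤ t → ∀ l, 1 ≤ l → l ≤ a →
      c⁻¹ ≤ φ (l * t) / φ t ∧ φ (l * t) / φ t ≤ c)
    {t u : ℝ} (ht : 1 ≤ t) (htu : t ≤ u) (hua : u ≤ a * t) :
    φ u ≤ c * φ t ∧ φ t ≤ c * φ u := by
  have ht0 : (0:ℝ) < t := lt_of_lt_of_le one_pos ht
  have hl1 : 1 ≤ u / t := (le_div_iff₀ ht0).2 (by linarith)
  have hl2 : u / t ≤ a := (div_le_iff₀ ht0).2 (by linarith)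
  have hmul : (u / t) * t = u := div_mul_cancel₀ u ht0.ne'
  obtain ⟨h1, h2⟩ := hspec t ht (u / t) hl1 hl2
  rw [hmul] at h1 h2
  have hφt : 0 < φ t := hpos t ht
  have hφu : 0 < φ u := hpos u (le_trans ht htu)
  have hc0 : (0:ℝ) < c := lt_of_lt_of_le one_pos hc
  constructor
  · exact (div_le_iff₀ hφt).1 h2
  · have : c⁻¹ * φ t ≤ φ u := by
      calc c⁻¹ * φ t ≤ (φ u / φ t) * φ t := by
            apply mul_le_mul_of_nonneg_right h1 hφt.le
        _ = φ u := div_mul_cancel₀ _ hφt.ne'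
    calc φ t = c * (c⁻¹ * φ t) := by field_simp
      _ ≤ c * φ u := by apply mul_le_mul_of_nonneg_left this hc0.le

/-- bounds on bounded intervals for RO functions -/
lemma ro_bounded (φ : ℝ → ℝ) (hφ : IsRO φ) (T : ℝ) (hT : 1 ≤ T) :
    ∃ B₁ > (0:ℝ), ∃ B₂ : ℝ, ∀ t, 1 ≤ t → t ≤ T → B₁ ≤ φ t ∧ φ t ≤ B₂ := by
  obtain ⟨-, hpos, a, ha, c, hc, hspec⟩ := hφ
  have ha0 : (0:ℝ) < a := lt_trans one_pos ha
  have hc0 : (0:ℝ) < c := lt_of_lt_of_le one_pos hc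
  -- key induction
  have key : ∀ k : ℕ, ∀ t, 1 ≤ t → t ≤ a ^ k →
      (c ^ k)⁻¹ * φ 1 ≤ φ t ∧ φ t ≤ c ^ k * φ 1 := by
    intro k
    induction k with
    | zero =>
      intro t ht1 ht2
      simp only [pow_zero] at ht2 ⊢
      have : t = 1 := le_antisymm ht2 ht1
      subst this; simp
    | succ k ih =>
      intro t ht1 ht2
      set s := max (t / a) 1 with hs
      have hs1 : 1 ≤ s := le_max_right _ _
      have hsk : s ≤ a ^ k := by
        apply max_le
        · rw [div_le_iff₀ ha0]
          calc t ≤ a ^ (k+1) := ht2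
            _ = a ^ k * a := pow_succ a k
        · exact one_le_pow₀ (le_of_lt ha)
      have hts : s ≤ t := by
        apply max_le
        · rw [div_le_iff₀ ha0]; nlinarith
        · exact ht1
      have hta : t ≤ a * s := by
        have h1 : t / a ≤ s := le_max_left _ _
        nlinarith [mul_div_cancel₀ t ha0.ne']
      obtain ⟨hup, hdown⟩ := ro_sandwich hpos hc hspec hs1 hts hta
      obtain ⟨ih1, ih2⟩ := ih s hs1 hsk
      have hφ1 : 0 < φ 1 := hpos 1 le_rfl
      constructor
      · have h1 : (c ^ (k+1))⁻¹ * φ 1 ≤ c⁻¹ * φ s := by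
          have h3 := mul_le_mul_of_nonneg_left ih1 (inv_nonneg.2 hc0.le)
          calc (c ^ (k+1))⁻¹ * φ 1 = c⁻¹ * ((c ^ k)⁻¹ * φ 1) := by
                rw [pow_succ, mul_inv]; ring
            _ ≤ c⁻¹ * φ s := h3
        refine le_trans h1 ?_
        rw [inv_mul_le_iff₀ hc0]; exact hdown
      · calc φ t ≤ c * φ s := hup
          _ ≤ c * (c ^ k * φ 1) := by nlinarith
          _ = c ^ (k+1) * φ 1 := by ring
  obtain ⟨k, hk⟩ := pow_unbounded_of_one_lt T ha
  have hφ1 : 0 < φ 1 := hpos 1 le_rfl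
  refine ⟨(c ^ k)⁻¹ * φ 1, mul_pos (by positivity) hφ1, c ^ k * φ 1, fun t ht1 ht2 => ?_⟩
  exact key k t ht1 (le_trans ht2 hk.le)

set_option maxHeartbeats 1000000 in
/-- embedding criterion for Hörmander spaces on the Fourier side:
`φ/φ₁` is bounded iff the `φ`-weighted `L²` integral is dominated by the
`φ₁`-weighted one, iff finiteness of the latter implies finiteness of the former. -/
theorem hoermander_embedding_criterion (n : ℕ) (hn : 1 ≤ n)
    (φ φ₁ : ℝ → ℝ) (hφ : IsRO φ) (hφ₁ : IsRO φ₁) :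
    List.TFAE
      [ ∃ M : ℝ, ∀ t, 1 ≤ t → φ t / φ₁ t ≤ M,
        ∃ C > (0 : ℝ), ∀ g : EuclideanSpace ℝ (Fin n) → ℂ, Measurable g →
          ∫⁻ ξ, ENNReal.ofReal (φ (smod ξ) ^ 2 * ‖g ξ‖ ^ 2) ≤
            ENNReal.ofReal C * ∫⁻ ξ, ENNReal.ofReal (φ₁ (smod ξ) ^ 2 * ‖g ξ‖ ^ 2),
        ∀ g : EuclideanSpace ℝ (Fin n) → ℂ, Measurable g →
          (∫⁻ ξ, ENNReal.ofReal (φ₁ (smod ξ) ^ 2 * ‖g ξ‖ ^ 2)) < ⊤ →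
          (∫⁻ ξ, ENNReal.ofReal (φ (smod ξ) ^ 2 * ‖g ξ‖ ^ 2)) < ⊤ ] := by
  obtain ⟨mφ, hpφ, aφ, haφ, cφ, hcφ, hsφ⟩ := hφ
  obtain ⟨mφ₁, hpφ₁, a₁, ha₁, c₁, hc₁, hs₁⟩ := hφ₁
  have hIsROφ : IsRO φ := ⟨mφ, hpφ, aφ, haφ, cφ, hcφ, hsφ⟩
  have hIsROφ₁ : IsRO φ₁ := ⟨mφ₁, hpφ₁, a₁, ha₁, c₁, hc₁, hs₁⟩
  have hcφ0 : (0:ℝ) < cφ := lt_of_lt_of_le one_pos hcφ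
  have hc₁0 : (0:ℝ) < c₁ := lt_of_lt_of_le one_pos hc₁
  tfae_have 1 → 2
  | ⟨M, hM⟩ => by
    have hM0 : 0 < M := lt_of_lt_of_le (div_pos (hpφ 1 le_rfl) (hpφ₁ 1 le_rfl)) (hM 1 le_rfl)
    refine ⟨M ^ 2, by positivity, fun g hg => ?_⟩
    have hpt : ∀ ξ : EuclideanSpace ℝ (Fin n),
        ENNReal.ofReal (φ (smod ξ) ^ 2 * ‖g ξ‖ ^ 2) ≤
          ENNReal.ofReal (M ^ 2) * ENNReal.ofReal (φ₁ (smod ξ) ^ 2 * ‖g ξ‖ ^ 2) := by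
      intro ξ
      have h1 : 1 ≤ smod ξ := one_le_smod ξ
      have hφ1pos : 0 < φ₁ (smod ξ) := hpφ₁ _ h1
      have hφpos : 0 < φ (smod ξ) := hpφ _ h1
      have hle : φ (smod ξ) ≤ M * φ₁ (smod ξ) := by
        have := hM (smod ξ) h1
        rw [div_le_iff₀ hφ1pos] at this; exact this
      rw [← ENNReal.ofReal_mul (by positivity)]
      apply ENNReal.ofReal_le_ofReal
      have : φ (smod ξ) ^ 2 ≤ M ^ 2 * φ₁ (smod ξ) ^ 2 := by nlinarith
      nlinarith [sq_nonneg ‖g ξ‖, sq_nonneg (φ (smod ξ))]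
    calc ∫⁻ ξ, ENNReal.ofReal (φ (smod ξ) ^ 2 * ‖g ξ‖ ^ 2)
        ≤ ∫⁻ ξ, ENNReal.ofReal (M ^ 2) * ENNReal.ofReal (φ₁ (smod ξ) ^ 2 * ‖g ξ‖ ^ 2) :=
          lintegral_mono hpt
      _ = ENNReal.ofReal (M ^ 2) * ∫⁻ ξ, ENNReal.ofReal (φ₁ (smod ξ) ^ 2 * ‖g ξ‖ ^ 2) :=
          lintegral_const_mul' _ _ ENNReal.ofReal_ne_top
  tfae_have 2 → 3
  | ⟨C, hC0, hC⟩ => by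
    intro g hg hfin
    calc ∫⁻ ξ, ENNReal.ofReal (φ (smod ξ) ^ 2 * ‖g ξ‖ ^ 2)
        ≤ ENNReal.ofReal C * ∫⁻ ξ, ENNReal.ofReal (φ₁ (smod ξ) ^ 2 * ‖g ξ‖ ^ 2) := hC g hg
      _ < ⊤ := ENNReal.mul_lt_top ENNReal.ofReal_lt_top hfin
  tfae_have 3 → 1
  | h3 => by
    by_contra hM
    push_neg at hM
    -- `a` : common multiplicative step
    set a : ℝ := min aφ a₁ with ha_def
    have ha : 1 < a := lt_min haφ ha₁
    have ha0 : (0:ℝ) < a := lt_trans one_pos ha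
    -- unboundedness beyond any threshold
    have step : ∀ M T : ℝ, ∃ s, 1 ≤ s ∧ T ≤ s ∧ M < φ s / φ₁ s := by
      intro M T
      by_contra hcon
      push_neg at hcon
      obtain ⟨B₁, hB₁, B₂, hB⟩ := ro_bounded φ hIsROφ (max T 1) (le_max_right _ _)
      obtain ⟨b₁, hb₁, b₂, hb⟩ := ro_bounded φ₁ hIsROφ₁ (max T 1) (le_max_right _ _)
      obtain ⟨s, hs1, hsM⟩ := hM (max M (B₂ / b₁))
      rcases le_or_gt s (max T 1) with hsT | hsT
      · obtain ⟨hl, hu⟩ := hB s hs1 hsT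
        obtain ⟨hl', hu'⟩ := hb s hs1 hsT
        have : φ s / φ₁ s ≤ B₂ / b₁ :=
          div_le_div₀ (le_trans (hpφ s hs1).le hu) hu hb₁ hl'
        exact absurd (lt_of_le_of_lt (le_max_right _ _) hsM) (not_lt.2 this)
      · have h1 := hcon s hs1 (le_trans (le_max_left T 1) hsT.le)
        exact absurd (lt_of_le_of_lt (le_max_left _ _) hsM) (not_lt.2 h1)
    choose F hF1 hF2 hF3 using step
    -- target ratios
    set K : ℕ → ℝ := fun k => cφ * c₁ * 2 ^ k with hK_def
    -- the sequence of points
    set t : ℕ → ℝ := fun k => Nat.rec (F (K 0) 1) (fun k tk => F (K (k+1)) (a * tk)) k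
      with ht_def
    have ht1 : ∀ k, 1 ≤ t k := by intro k; cases k <;> exact hF1 _ _
    have hta : ∀ k, a * t k ≤ t (k+1) := fun k => hF2 _ _
    have htR : ∀ k, K k < φ (t k) / φ₁ (t k) := by intro k; cases k <;> exact hF3 _ _
    have htpos : ∀ k, (0:ℝ) < t k := fun k => lt_of_lt_of_le one_pos (ht1 k)
    have htlt : ∀ k, t k < a * t k := by
      intro k; nlinarith [htpos k, ht1 k]
    have htmono : Monotone t := by
      apply monotone_nat_of_le_succ
      intro k; exact le_trans (htlt k).le (hta k)
    have hjump : ∀ j k, j < k → a * t j ≤ t k :=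
      fun j k h => le_trans (hta j) (htmono h)
    -- the annuli
    set A : ℕ → Set (EuclideanSpace ℝ (Fin n)) :=
      fun k => smod ⁻¹' (Ico (t k) (a * t k)) with hA_def
    have hAmeas : ∀ k, MeasurableSet (A k) := fun k => measurable_smod measurableSet_Ico
    have hIdisj : ∀ j k, j < k →
        Disjoint (Ico (t j) (a * t j)) (Ico (t k) (a * t k)) := by
      intro j k hjk
      rw [Set.Ico_disjoint_Ico]
      exact le_trans (min_le_left _ _) (le_trans (hjump j k hjk) (le_max_right _ _))
    have hAdisj : Pairwise (Function.onFun Disjoint A) := by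
      rw [pairwise_disjoint_on]
      intro j k hjk
      exact Disjoint.preimage _ (hIdisj j k hjk)
    -- measure bounds
    have hApos : ∀ k, 0 < volume (A k) := by
      intro k
      set mid : ℝ := (t k + a * t k) / 2 with hmid
      have hmid1 : 1 ≤ mid := by nlinarith [ht1 k, htlt k]
      have hmidl : t k < mid := by nlinarith [htlt k]
      have hmidr : mid < a * t k := by nlinarith [htlt k]
      have h1m : (0:ℝ) ≤ mid ^ 2 - 1 := by nlinarith
      set ξ₀ : EuclideanSpace ℝ (Fin n) :=
        EuclideanSpace.single (⟨0, hn⟩ : Fin n) (Real.sqrt (mid ^ 2 - 1)) with hξ₀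
      have hnorm : ‖ξ₀‖ = Real.sqrt (mid ^ 2 - 1) := by
        rw [hξ₀, EuclideanSpace.norm_single]
        exact abs_of_nonneg (Real.sqrt_nonneg _)
      have hsmod : smod ξ₀ = mid := by
        rw [smod, hnorm, Real.sq_sqrt h1m]
        rw [show 1 + (mid ^ 2 - 1) = mid ^ 2 by ring]
        exact Real.sqrt_sq (by linarith)
      have hopen : IsOpen (smod (n := n) ⁻¹' (Ioo (t k) (a * t k))) :=
        IsOpen.preimage continuous_smod isOpen_Ioo
      have hne : (smod (n := n) ⁻¹' (Ioo (t k) (a * t k))).Nonempty :=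
        ⟨ξ₀, by rw [Set.mem_preimage, hsmod]; exact ⟨hmidl, hmidr⟩⟩
      calc (0:ENNReal) < volume (smod (n := n) ⁻¹' (Ioo (t k) (a * t k))) :=
            hopen.measure_pos volume hne
        _ ≤ volume (A k) := measure_mono (preimage_mono Ioo_subset_Ico_self)
    have hAfin : ∀ k, volume (A k) < ⊤ := by
      intro k
      have hsub : A k ⊆ Metric.closedBall 0 (a * t k) := by
        intro ξ hξ
        rw [Metric.mem_closedBall, dist_zero_right]
        exact le_trans (norm_le_smod ξ) (le_trans hξ.2.le le_rfl)
      exact lt_of_le_of_lt (measure_mono hsub) measure_closedBall_lt_top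
    set μA : ℕ → ℝ := fun k => (volume (A k)).toReal with hμA_def
    have hμpos : ∀ k, 0 < μA k := fun k => ENNReal.toReal_pos (hApos k).ne' (hAfin k).ne
    have hvol : ∀ k, volume (A k) = ENNReal.ofReal (μA k) :=
      fun k => (ENNReal.ofReal_toReal (hAfin k).ne).symm
    -- amplitudes
    have hφtk : ∀ k, 0 < φ (t k) := fun k => hpφ _ (ht1 k)
    have hφ₁tk : ∀ k, 0 < φ₁ (t k) := fun k => hpφ₁ _ (ht1 k)
    set d : ℕ → ℝ := fun k => cφ / (φ (t k) * Real.sqrt (μA k)) with hd_def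
    have hd0 : ∀ k, 0 < d k := by
      intro k
      apply div_pos hcφ0 (mul_pos (hφtk k) (Real.sqrt_pos.2 (hμpos k)))
    have hdsq : ∀ k, d k ^ 2 * (φ (t k) ^ 2 * μA k) = cφ ^ 2 := by
      intro k
      have h1 : Real.sqrt (μA k) ^ 2 = μA k := Real.sq_sqrt (hμpos k).le
      have h2 : (φ (t k) * Real.sqrt (μA k)) ^ 2 = φ (t k) ^ 2 * μA k := by
        rw [mul_pow, h1]
      have h3 : φ (t k) ^ 2 * μA k ≠ 0 :=
        (mul_pos (pow_pos (hφtk k) 2) (hμpos k)).ne'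
      rw [hd_def]
      show (cφ / (φ (t k) * Real.sqrt (μA k))) ^ 2 * (φ (t k) ^ 2 * μA k) = cφ ^ 2
      rw [div_pow, h2]
      exact div_mul_cancel₀ _ h3
    -- the function g
    set W : ℝ → ENNReal := fun u => ∑' k,
      (Ico (t k) (a * t k)).indicator (fun _ => ENNReal.ofReal (d k)) u with hW_def
    have hWmeas : Measurable W := by
      apply Measurable.ennreal_tsum
      intro k
      exact measurable_const.indicator measurableSet_Ico
    set g : EuclideanSpace ℝ (Fin n) → ℂ := fun ξ => ((W (smod ξ)).toReal : ℂ) with hg_def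
    have hgmeas : Measurable g :=
      Complex.measurable_ofReal.comp ((hWmeas.comp measurable_smod).ennreal_toReal)
    have hWk : ∀ k, ∀ u ∈ Ico (t k) (a * t k), W u = ENNReal.ofReal (d k) := by
      intro k u hu
      show (∑' j, (Ico (t j) (a * t j)).indicator
        (fun _ => ENNReal.ofReal (d j)) u) = ENNReal.ofReal (d k)
      rw [tsum_eq_single k]
      · exact indicator_of_mem hu _
      · intro j hjk
        apply indicator_of_notMem
        rcases lt_or_gt_of_ne hjk with h | h
        · exact (Set.disjoint_right.1 (hIdisj j k h)) hu
        · exact (Set.disjoint_left.1 (hIdisj k j h)) hu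
    have hg_on : ∀ k, ∀ ξ ∈ A k, ‖g ξ‖ ^ 2 = d k ^ 2 := by
      intro k ξ hξ
      rw [hg_def]
      simp only [Complex.norm_real, Real.norm_eq_abs, sq_abs]
      rw [hWk k _ hξ, ENNReal.toReal_ofReal (hd0 k).le]
    have hg_off : ∀ ξ, ξ ∉ (⋃ k, A k) → g ξ = 0 := by
      intro ξ hξ
      simp only [Set.mem_iUnion, not_exists] at hξ
      have hξ' : ∀ k, smod ξ ∉ Ico (t k) (a * t k) := fun k h => hξ k h
      have hW0 : W (smod ξ) = 0 := by
        show (∑' j, (Ico (t j) (a * t j)).indicator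
          (fun _ => ENNReal.ofReal (d j)) (smod ξ)) = 0
        convert tsum_zero with j
        exact indicator_of_notMem (hξ' j) _
      show ((W (smod ξ)).toReal : ℂ) = 0
      rw [hW0]; simp
    -- splitting the integrals
    have hsplit : ∀ ψ : ℝ → ℝ,
        ∫⁻ ξ, ENNReal.ofReal (ψ (smod ξ) ^ 2 * ‖g ξ‖ ^ 2) =
          ∑' k, ∫⁻ ξ in A k, ENNReal.ofReal (ψ (smod ξ) ^ 2 * ‖g ξ‖ ^ 2) := by
      intro ψ
      have hindi : (fun ξ => ENNReal.ofReal (ψ (smod ξ) ^ 2 * ‖g ξ‖ ^ 2)) =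
          (⋃ k, A k).indicator (fun ξ => ENNReal.ofReal (ψ (smod ξ) ^ 2 * ‖g ξ‖ ^ 2)) := by
        ext ξ
        by_cases hξ : ξ ∈ ⋃ k, A k
        · rw [indicator_of_mem hξ]
        · rw [indicator_of_notMem hξ, hg_off ξ hξ]
          simp
      calc ∫⁻ ξ, ENNReal.ofReal (ψ (smod ξ) ^ 2 * ‖g ξ‖ ^ 2)
          = ∫⁻ ξ, (⋃ k, A k).indicator
              (fun ξ => ENNReal.ofReal (ψ (smod ξ) ^ 2 * ‖g ξ‖ ^ 2)) ξ :=
            lintegral_congr (fun ξ => congrFun hindi ξ)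
        _ = ∫⁻ ξ in ⋃ k, A k, ENNReal.ofReal (ψ (smod ξ) ^ 2 * ‖g ξ‖ ^ 2) :=
            lintegral_indicator (MeasurableSet.iUnion hAmeas) _
        _ = ∑' k, ∫⁻ ξ in A k, ENNReal.ofReal (ψ (smod ξ) ^ 2 * ‖g ξ‖ ^ 2) :=
            lintegral_iUnion hAmeas hAdisj _
    -- bounds for points in the annulus
    have hsand : ∀ k, ∀ ξ ∈ A k,
        (φ (smod ξ) ≤ cφ * φ (t k) ∧ φ (t k) ≤ cφ * φ (smod ξ)) ∧
        (φ₁ (smod ξ) ≤ c₁ * φ₁ (t k) ∧ φ₁ (t k) ≤ c₁ * φ₁ (smod ξ)) := by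
      intro k ξ hξ
      obtain ⟨hl, hr⟩ := hξ
      constructor
      · exact ro_sandwich hpφ hcφ hsφ (ht1 k) hl
          (le_trans hr.le (mul_le_mul_of_nonneg_right (min_le_left _ _) (htpos k).le))
      · exact ro_sandwich hpφ₁ hc₁ hs₁ (ht1 k) hl
          (le_trans hr.le (mul_le_mul_of_nonneg_right (min_le_right _ _) (htpos k).le))
    -- the φ₁-integral is finite
    have hfin : ∫⁻ ξ, ENNReal.ofReal (φ₁ (smod ξ) ^ 2 * ‖g ξ‖ ^ 2) < ⊤ := by
      rw [hsplit φ₁]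
      have hpiece : ∀ k, ∫⁻ ξ in A k, ENNReal.ofReal (φ₁ (smod ξ) ^ 2 * ‖g ξ‖ ^ 2) ≤
          (2⁻¹ : ENNReal) ^ k := by
        intro k
        have hbd : ∀ ξ ∈ A k, ENNReal.ofReal (φ₁ (smod ξ) ^ 2 * ‖g ξ‖ ^ 2) ≤
            ENNReal.ofReal ((c₁ * φ₁ (t k)) ^ 2 * d k ^ 2) := by
          intro ξ hξ
          apply ENNReal.ofReal_le_ofReal
          rw [hg_on k ξ hξ]
          have h1 := ((hsand k ξ hξ).2).1
          have h2 : 0 < φ₁ (smod ξ) := hpφ₁ _ (one_le_smod ξ)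
          have h5 : φ₁ (smod ξ) ^ 2 ≤ (c₁ * φ₁ (t k)) ^ 2 := by nlinarith
          exact mul_le_mul_of_nonneg_right h5 (sq_nonneg _)
        calc ∫⁻ ξ in A k, ENNReal.ofReal (φ₁ (smod ξ) ^ 2 * ‖g ξ‖ ^ 2)
            ≤ ∫⁻ _ in A k, ENNReal.ofReal ((c₁ * φ₁ (t k)) ^ 2 * d k ^ 2) :=
              setLIntegral_mono measurable_const hbd
          _ = ENNReal.ofReal ((c₁ * φ₁ (t k)) ^ 2 * d k ^ 2) * volume (A k) :=
              setLIntegral_const _ _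
          _ = ENNReal.ofReal ((c₁ * φ₁ (t k)) ^ 2 * d k ^ 2 * μA k) := by
              rw [hvol k, ← ENNReal.ofReal_mul (by positivity)]
          _ ≤ (2⁻¹ : ENNReal) ^ k := by
              have hRk := htR k
              have hKpos : 0 < K k := by
                rw [hK_def]; positivity
              -- real inequality: value ≤ (1/2)^k
              have hval : (c₁ * φ₁ (t k)) ^ 2 * d k ^ 2 * μA k ≤ ((1:ℝ)/2) ^ k := by
                have hd2 := hdsq k
                have hratio : cφ * c₁ * 2 ^ k * φ₁ (t k) < φ (t k) := by
                  rw [hK_def] at hRk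
                  calc cφ * c₁ * 2 ^ k * φ₁ (t k)
                      < (φ (t k) / φ₁ (t k)) * φ₁ (t k) := by
                        apply mul_lt_mul_of_pos_right hRk (hφ₁tk k)
                    _ = φ (t k) := div_mul_cancel₀ _ (hφ₁tk k).ne'
                have key : (c₁ * φ₁ (t k)) ^ 2 * d k ^ 2 * μA k =
                    cφ ^ 2 * c₁ ^ 2 * (φ₁ (t k) / φ (t k)) ^ 2 := by
                  have hφne : φ (t k) ≠ 0 := (hφtk k).ne'
                  field_simp
                  nlinarith [hd2]
                rw [key]
                have h2k : (0:ℝ) < 2 ^ k := by positivity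
                have hq : φ₁ (t k) / φ (t k) < 1 / (cφ * c₁ * 2 ^ k) := by
                  rw [div_lt_div_iff₀ (hφtk k) (by positivity)]
                  nlinarith [hratio]
                have hqpos : 0 < φ₁ (t k) / φ (t k) := div_pos (hφ₁tk k) (hφtk k)
                calc cφ ^ 2 * c₁ ^ 2 * (φ₁ (t k) / φ (t k)) ^ 2
                    ≤ cφ ^ 2 * c₁ ^ 2 * (1 / (cφ * c₁ * 2 ^ k)) ^ 2 := by
                      apply mul_le_mul_of_nonneg_left _ (by positivity)
                      nlinarith [hq, hqpos]
                  _ = (1 / 2 ^ k) ^ 2 := by field_simp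
                  _ ≤ 1 / 2 ^ k := by
                      rw [sq]
                      have h1 : (1:ℝ) / 2 ^ k ≤ 1 := by
                        rw [div_le_one h2k]; exact one_le_pow₀ one_le_two
                      have h0 : (0:ℝ) ≤ 1 / 2 ^ k := by positivity
                      nlinarith [h1, h0]
                  _ = (1/2 : ℝ) ^ k := by rw [div_pow, one_pow]
              calc ENNReal.ofReal ((c₁ * φ₁ (t k)) ^ 2 * d k ^ 2 * μA k)
                  ≤ ENNReal.ofReal (((1:ℝ)/2) ^ k) := ENNReal.ofReal_le_ofReal hval
                _ = (2⁻¹ : ENNReal) ^ k := by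
                    rw [ENNReal.ofReal_pow (by norm_num), one_div,
                      ENNReal.ofReal_inv_of_pos (by norm_num), ENNReal.ofReal_ofNat]
      calc ∑' k, ∫⁻ ξ in A k, ENNReal.ofReal (φ₁ (smod ξ) ^ 2 * ‖g ξ‖ ^ 2)
          ≤ ∑' k : ℕ, (2⁻¹ : ENNReal) ^ k := ENNReal.tsum_le_tsum hpiece
        _ = (1 - 2⁻¹)⁻¹ := ENNReal.tsum_geometric _
        _ < ⊤ := by
            rw [show (1 - 2⁻¹ : ENNReal) = 2⁻¹ by
              rw [ENNReal.sub_eq_of_eq_add (by norm_num)]; rw [ENNReal.inv_two_add_inv_two]]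
            simp
    -- the φ-integral is infinite
    have hinf : ∫⁻ ξ, ENNReal.ofReal (φ (smod ξ) ^ 2 * ‖g ξ‖ ^ 2) = ⊤ := by
      rw [hsplit φ]
      have hFmeas : Measurable fun ξ : EuclideanSpace ℝ (Fin n) =>
          ENNReal.ofReal (φ (smod ξ) ^ 2 * ‖g ξ‖ ^ 2) :=
        ENNReal.measurable_ofReal.comp
          (((mφ.comp measurable_smod).pow_const 2).mul ((hgmeas.norm).pow_const 2))
      have hpiece : ∀ k, (1 : ENNReal) ≤
          ∫⁻ ξ in A k, ENNReal.ofReal (φ (smod ξ) ^ 2 * ‖g ξ‖ ^ 2) := by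
        intro k
        have hbd : ∀ ξ ∈ A k,
            ENNReal.ofReal ((φ (t k) / cφ) ^ 2 * d k ^ 2) ≤
            ENNReal.ofReal (φ (smod ξ) ^ 2 * ‖g ξ‖ ^ 2) := by
          intro ξ hξ
          apply ENNReal.ofReal_le_ofReal
          rw [hg_on k ξ hξ]
          have h1 := ((hsand k ξ hξ).1).2
          have h2 : 0 < φ (smod ξ) := hpφ _ (one_le_smod ξ)
          have h3 : φ (t k) / cφ ≤ φ (smod ξ) := by
            rw [div_le_iff₀ hcφ0]; linarith [h1]
          have h4 : 0 ≤ φ (t k) / cφ := div_nonneg (hφtk k).le hcφ0.le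
          have h5 : (φ (t k) / cφ) ^ 2 ≤ φ (smod ξ) ^ 2 := by nlinarith
          exact mul_le_mul_of_nonneg_right h5 (sq_nonneg _)
        have hcalc : ENNReal.ofReal ((φ (t k) / cφ) ^ 2 * d k ^ 2) * volume (A k) = 1 := by
          rw [hvol k, ← ENNReal.ofReal_mul
            (p := (φ (t k) / cφ) ^ 2 * d k ^ 2) (by positivity)]
          have : (φ (t k) / cφ) ^ 2 * d k ^ 2 * μA k = 1 := by
            have hd2 := hdsq k
            have hφne : φ (t k) ≠ 0 := (hφtk k).ne'
            have hμne : μA k ≠ 0 := (hμpos k).ne'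
            field_simp
            nlinarith [hd2]
          rw [this]; simp
        calc (1 : ENNReal) = ENNReal.ofReal ((φ (t k) / cφ) ^ 2 * d k ^ 2) * volume (A k) :=
              hcalc.symm
          _ = ∫⁻ _ in A k, ENNReal.ofReal ((φ (t k) / cφ) ^ 2 * d k ^ 2) :=
              (setLIntegral_const _ _).symm
          _ ≤ ∫⁻ ξ in A k, ENNReal.ofReal (φ (smod ξ) ^ 2 * ‖g ξ‖ ^ 2) :=
              setLIntegral_mono hFmeas hbd
      have : (⊤ : ENNReal) = ∑' _ : ℕ, (1 : ENNReal) :=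
        (ENNReal.tsum_const_eq_top_of_ne_zero one_ne_zero).symm
      rw [eq_top_iff, this]
      exact ENNReal.tsum_le_tsum hpiece
    exact absurd (h3 g hgmeas hfin) (by rw [hinf]; exact lt_irrefl ⊤)
  tfae_finish
end

section
/- Fix an integer n ≥ 1, let φ : [1,∞) → (0,∞) be an RO-varying function, and let r ≥ 0 be an integer such that ∫₁^{∞} t^{2r+n-1} · φ(t)^{-2} dt < ∞. Let g : ℝⁿ → ℂ be Lebesgue measurable with ∫_{ℝⁿ} φ(⟨ξ⟩)² |g(ξ)|² dξ < ∞. Then g is integrable on ℝⁿ, the function u(x) := ∫_{ℝⁿ} e^{2πi x·ξ} g(ξ) dξ is r times continuously differentiable on ℝⁿ, all its partial derivatives of order ≤ r are bounded on ℝⁿ, and there exists a constant C > 0, depending only on n, r, and φ (not on g), such that sup_{x∈ℝⁿ} |∂^{α} u(x)| ≤ C · ( ∫_{ℝⁿ} φ(⟨ξ⟩)² |g(ξ)|² dξ )^{1/2} for every multi-index α with |α| ≤ r. -/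
open MeasureTheory

section Aux

open Set

lemma ro_lower {φ : ℝ → ℝ} {a c : ℝ} (ha : 1 < a) (hc : 1 ≤ c)
    (hpos : ∀ t, 1 ≤ t → 0 < φ t)
    (h : ∀ t, 1 ≤ t → ∀ l, 1 ≤ l → l ≤ a → c⁻¹ ≤ φ (l * t) / φ t ∧ φ (l * t) / φ t ≤ c) :
    ∀ m : ℕ, ∀ t, 1 ≤ t → ∀ l, 1 ≤ l → l ≤ a ^ m → φ t ≤ c ^ m * φ (l * t) := by
  intro m
  induction m with
  | zero =>
    intro t ht l hl hl'
    have : l = 1 := le_antisymm (by simpa using hl') hl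
    simp [this]
  | succ m ih =>
    intro t ht l hl hl'
    have ham : (1:ℝ) ≤ a ^ m := one_le_pow₀ ha.le
    rcases le_or_gt l (a ^ m) with h1 | h1
    · have hlt : (1:ℝ) ≤ l * t := (by nlinarith : (1:ℝ) ≤ _)
      have := ih t ht l hl h1
      have hφ : 0 < φ (l * t) := hpos _ hlt
      have hcm : (c:ℝ) ^ m ≤ c ^ (m+1) := pow_le_pow_right₀ hc (by omega)
      nlinarith
    · have ht' : (1:ℝ) ≤ a ^ m * t := (by nlinarith : (1:ℝ) ≤ _)
      have hane : (a:ℝ) ^ m ≠ 0 := by positivity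
      have hl'1 : (1:ℝ) ≤ l / a ^ m := (one_le_div (by positivity)).2 h1.le
      have hl'2 : l / a ^ m ≤ a := by
        rw [div_le_iff₀ (by positivity)]
        calc l ≤ a ^ (m+1) := hl'
          _ = a * a ^ m := by ring
      have key := (h (a ^ m * t) ht' (l / a ^ m) hl'1 hl'2).1
      have heq : l / a ^ m * (a ^ m * t) = l * t := by field_simp
      rw [heq] at key
      have hφ1 : 0 < φ (a ^ m * t) := hpos _ ht'
      have hφ2 : 0 < φ (l * t) := hpos _ ((by nlinarith : (1:ℝ) ≤ _))
      have hc0 : (0:ℝ) < c := by linarith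
      have h2 : φ (a ^ m * t) ≤ c * φ (l * t) := by
        rw [le_div_iff₀ hφ1] at key
        calc φ (a ^ m * t) = c * (c⁻¹ * φ (a ^ m * t)) := by field_simp
          _ ≤ c * φ (l * t) := by nlinarith
      have h3 := ih t ht (a ^ m) ham le_rfl
      calc φ t ≤ c ^ m * φ (a ^ m * t) := h3
        _ ≤ c ^ m * (c * φ (l * t)) := by nlinarith [pow_pos hc0 m]
        _ = c ^ (m+1) * φ (l * t) := by ring

lemma lintegral_fun_norm_addHaar' {E : Type*} [NormedAddCommGroup E] [NormedSpace ℝ E]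
    [MeasurableSpace E] [BorelSpace E] [FiniteDimensional ℝ E] [Nontrivial E]
    (μ : Measure E) [μ.IsAddHaarMeasure] {f : ℝ → ENNReal} (hf : Measurable f) :
    ∫⁻ x, f ‖x‖ ∂μ = μ.toSphere univ *
      ∫⁻ y in Ioi (0:ℝ), ENNReal.ofReal (y ^ (Module.finrank ℝ E - 1)) * f y := by
  have hmf : Measurable fun p : Metric.sphere (0:E) 1 × Ioi (0:ℝ) => f p.2 :=
    hf.comp (measurable_subtype_coe.comp measurable_snd)
  calc ∫⁻ x, f ‖x‖ ∂μ
      = ∫⁻ x : ({(0:E)}ᶜ : Set E), f ‖(x:E)‖ ∂(μ.comap (↑)) := by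
        rw [lintegral_subtype_comap (measurableSet_singleton (0:E)).compl (fun x => f ‖x‖),
          restrict_compl_singleton]
    _ = ∫⁻ p : Metric.sphere (0:E) 1 × Ioi (0:ℝ), f p.2
          ∂(μ.toSphere.prod (.volumeIoiPow (Module.finrank ℝ E - 1))) := by
        rw [← μ.measurePreserving_homeomorphUnitSphereProd.lintegral_comp hmf]
        exact lintegral_congr fun x => by simp
    _ = μ.toSphere univ * ∫⁻ y : Ioi (0:ℝ), f y ∂(.volumeIoiPow (Module.finrank ℝ E - 1)) := by
        rw [lintegral_prod _ hmf.aemeasurable]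
        simp [lintegral_const, mul_comm]
    _ = μ.toSphere univ *
          ∫⁻ y in Ioi (0:ℝ), ENNReal.ofReal (y ^ (Module.finrank ℝ E - 1)) * f y := by
        congr 1
        rw [Measure.volumeIoiPow,
          lintegral_withDensity_eq_lintegral_mul _
            (by exact (measurable_subtype_coe.pow_const _).ennreal_ofReal)
            (show Measurable fun y : Ioi (0:ℝ) => f y from hf.comp measurable_subtype_coe),
          ← lintegral_subtype_comap measurableSet_Ioi
            (fun y => ENNReal.ofReal (y ^ (Module.finrank ℝ E - 1)) * f y)]
        exact lintegral_congr fun x => rfl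

lemma one_le_sq1 {y : ℝ} : 1 ≤ Real.sqrt (1 + y^2) := by
  have := Real.sqrt_le_sqrt (show (1:ℝ) ≤ 1 + y^2 by nlinarith)
  simpa using this

lemma measurable_smod_s10 {n : ℕ} : Measurable fun ξ : EuclideanSpace ℝ (Fin n) => smod ξ :=
  Real.continuous_sqrt.measurable.comp
    (measurable_const.add (measurable_norm.pow_const 2))

lemma inv_le_c_mul_inv {x y c : ℝ} (hx : 0 < x) (hy : 0 < y) (hc : 0 < c) (h : x ≤ c * y) :
    y⁻¹ ≤ c * x⁻¹ := by
  rw [inv_eq_one_div, show c * x⁻¹ = c / x by rw [div_eq_mul_inv],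
    div_le_div_iff₀ hy hx]
  linarith

lemma key_finite (n : ℕ) (hn : 1 ≤ n) (φ : ℝ → ℝ) (hmeas : Measurable φ)
    (hpos : ∀ t, 1 ≤ t → 0 < φ t) (a c : ℝ) (ha : 1 < a) (hc : 1 ≤ c)
    (hlow : ∀ m : ℕ, ∀ t, 1 ≤ t → ∀ l, 1 ≤ l → l ≤ a ^ m → φ t ≤ c ^ m * φ (l * t))
    (r : ℕ)
    (hint : (∫⁻ t in Set.Ici (1 : ℝ),
        ENNReal.ofReal (t ^ (2 * r + n - 1) * (φ t)⁻¹ ^ 2)) < ⊤) :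
    (∫⁻ ξ : EuclideanSpace ℝ (Fin n),
        ENNReal.ofReal ((smod ξ ^ r * (φ (smod ξ))⁻¹) ^ 2)) < ⊤ := by
  obtain ⟨m, hm⟩ : ∃ m : ℕ, Real.sqrt 2 ≤ a ^ m := by
    obtain ⟨m, hm⟩ := pow_unbounded_of_one_lt (2:ℝ) ha
    refine ⟨m, le_trans ?_ hm.le⟩
    have : Real.sqrt 2 ≤ Real.sqrt (2^2) := Real.sqrt_le_sqrt (by norm_num)
    simpa [Real.sqrt_sq] using this
  have hc0 : (0:ℝ) < c := lt_of_lt_of_le one_pos hc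
  have hcm : (0:ℝ) < c ^ m := pow_pos hc0 m
  have hinv : ∀ s : ℝ, 1 ≤ s → (φ (Real.sqrt (1 + s^2)))⁻¹ ≤ c ^ m * (φ s)⁻¹ := by
    intro s hs
    have hs0 : (0:ℝ) < s := by linarith
    have hsub : Real.sqrt (1 + s^2) ≤ Real.sqrt 2 * s := by
      calc Real.sqrt (1 + s^2) ≤ Real.sqrt (2 * s^2) := Real.sqrt_le_sqrt (by nlinarith)
        _ = Real.sqrt 2 * s := by
            rw [Real.sqrt_mul (by norm_num), Real.sqrt_sq hs0.le]
    have hl1 : 1 ≤ Real.sqrt (1 + s^2) / s := by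
      rw [le_div_iff₀ hs0, one_mul]
      calc s = Real.sqrt (s^2) := (Real.sqrt_sq hs0.le).symm
        _ ≤ Real.sqrt (1 + s^2) := Real.sqrt_le_sqrt (by nlinarith)
    have hl2 : Real.sqrt (1 + s^2) / s ≤ a ^ m := by
      rw [div_le_iff₀ hs0]
      calc Real.sqrt (1 + s^2) ≤ Real.sqrt 2 * s := hsub
        _ ≤ a ^ m * s := by nlinarith [Real.sqrt_nonneg 2]
    have hkey := hlow m s hs _ hl1 hl2
    rw [show Real.sqrt (1 + s^2) / s * s = Real.sqrt (1 + s^2) by field_simp] at hkey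
    exact inv_le_c_mul_inv (hpos s hs) (hpos _ one_le_sq1) hcm hkey
  have hinv1 : ∀ y : ℝ, 0 ≤ y → y ≤ 1 → (φ (Real.sqrt (1 + y^2)))⁻¹ ≤ c ^ m * (φ 1)⁻¹ := by
    intro y hy0 hy
    have hl2 : Real.sqrt (1 + y^2) ≤ a ^ m := by
      calc Real.sqrt (1 + y^2) ≤ Real.sqrt 2 := Real.sqrt_le_sqrt (by nlinarith)
        _ ≤ a ^ m := hm
    have hkey := hlow m 1 le_rfl _ one_le_sq1 hl2
    rw [mul_one] at hkey
    exact inv_le_c_mul_inv (hpos 1 le_rfl) (hpos _ one_le_sq1) hcm hkey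
  set F : ℝ → ENNReal := fun y =>
    ENNReal.ofReal ((Real.sqrt (1 + y^2) ^ r * (φ (Real.sqrt (1 + y^2)))⁻¹) ^ 2) with hF
  have hsqm : Measurable fun y : ℝ => Real.sqrt (1 + y^2) :=
    Real.continuous_sqrt.measurable.comp (measurable_const.add (measurable_id.pow_const 2))
  have hFmeas : Measurable F :=
    (((hsqm.pow_const r).mul ((hmeas.comp hsqm).inv)).pow_const 2).ennreal_ofReal
  haveI : Nontrivial (EuclideanSpace ℝ (Fin n)) := by
    refine Module.nontrivial_of_finrank_pos (R := ℝ) ?_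
    rw [finrank_euclideanSpace_fin]; omega
  have heq : (∫⁻ ξ : EuclideanSpace ℝ (Fin n),
      ENNReal.ofReal ((smod ξ ^ r * (φ (smod ξ))⁻¹) ^ 2)) = ∫⁻ ξ, F ‖ξ‖ := rfl
  rw [heq, lintegral_fun_norm_addHaar' volume hFmeas, finrank_euclideanSpace_fin]
  refine ENNReal.mul_lt_top
    (measure_lt_top (volume : Measure (EuclideanSpace ℝ (Fin n))).toSphere univ) ?_
  rw [← Ioc_union_Ioi_eq_Ioi (zero_le_one (α := ℝ)),
    lintegral_union measurableSet_Ioi (Ioc_disjoint_Ioi le_rfl)]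
  refine ENNReal.add_lt_top.2 ⟨?_, ?_⟩
  · set K0 : ℝ := (Real.sqrt 2 ^ r * (c ^ m * (φ 1)⁻¹)) ^ 2 with hK0
    calc ∫⁻ y in Ioc (0:ℝ) 1, ENNReal.ofReal (y ^ (n-1)) * F y
        ≤ ∫⁻ _ in Ioc (0:ℝ) 1, ENNReal.ofReal K0 := by
          refine setLIntegral_mono' measurableSet_Ioc fun y hy => ?_
          have h1 : ENNReal.ofReal (y ^ (n-1)) ≤ 1 := by
            rw [show (1:ENNReal) = ENNReal.ofReal 1 by simp]
            exact ENNReal.ofReal_le_ofReal (pow_le_one₀ hy.1.le hy.2)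
          have h2 : F y ≤ ENNReal.ofReal K0 := by
            refine ENNReal.ofReal_le_ofReal ?_
            have e1 : Real.sqrt (1 + y^2) ^ r ≤ Real.sqrt 2 ^ r :=
              pow_le_pow_left₀ (Real.sqrt_nonneg _)
                (Real.sqrt_le_sqrt (by nlinarith [hy.2, hy.1])) r
            have e2 := hinv1 y hy.1.le hy.2
            have hb : (0:ℝ) < φ (Real.sqrt (1 + y^2)) := hpos _ one_le_sq1
            refine pow_le_pow_left₀ (by positivity) ?_ 2
            exact mul_le_mul e1 e2 (by positivity) (by positivity)
          calc ENNReal.ofReal (y ^ (n-1)) * F y ≤ 1 * ENNReal.ofReal K0 :=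
                mul_le_mul' h1 h2
            _ = ENNReal.ofReal K0 := one_mul _
      _ < ⊤ := by
          rw [setLIntegral_const]
          exact ENNReal.mul_lt_top ENNReal.ofReal_lt_top measure_Ioc_lt_top
  · set K1 : ℝ := 2 ^ r * (c ^ m) ^ 2 with hK1
    calc ∫⁻ y in Ioi (1:ℝ), ENNReal.ofReal (y ^ (n-1)) * F y
        ≤ ∫⁻ y in Ioi (1:ℝ),
            ENNReal.ofReal K1 * ENNReal.ofReal (y ^ (2*r+n-1) * (φ y)⁻¹ ^ 2) := by
          refine setLIntegral_mono' measurableSet_Ioi fun y hy => ?_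
          have hy1 : (1:ℝ) ≤ y := le_of_lt hy
          have h0 : (0:ℝ) ≤ 1 + y^2 := by positivity
          have hφy : (0:ℝ) < φ y := hpos y hy1
          have hφs : (0:ℝ) < φ (Real.sqrt (1 + y^2)) := hpos _ one_le_sq1
          rw [hF, ← ENNReal.ofReal_mul (by positivity), ← ENNReal.ofReal_mul (by positivity)]
          refine ENNReal.ofReal_le_ofReal ?_
          have e1 : (Real.sqrt (1 + y^2) ^ r * (φ (Real.sqrt (1 + y^2)))⁻¹) ^ 2
              = (1 + y^2) ^ r * ((φ (Real.sqrt (1 + y^2)))⁻¹) ^ 2 := by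
            rw [mul_pow, ← pow_mul, mul_comm r 2, pow_mul, Real.sq_sqrt h0]
          have e2 : ((1:ℝ) + y^2) ^ r ≤ 2 ^ r * y ^ (2*r) := by
            calc ((1:ℝ) + y^2) ^ r ≤ (2 * y^2) ^ r := pow_le_pow_left₀ h0 (by nlinarith) r
              _ = 2 ^ r * y ^ (2*r) := by rw [mul_pow, ← pow_mul]
          have e3 : ((φ (Real.sqrt (1 + y^2)))⁻¹) ^ 2 ≤ (c ^ m) ^ 2 * ((φ y)⁻¹) ^ 2 := by
            calc ((φ (Real.sqrt (1 + y^2)))⁻¹) ^ 2 ≤ (c ^ m * (φ y)⁻¹) ^ 2 :=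
                  pow_le_pow_left₀ (by positivity) (hinv y hy1) 2
              _ = (c ^ m) ^ 2 * ((φ y)⁻¹) ^ 2 := mul_pow _ _ 2
          have e4 : y ^ (n-1) * y ^ (2*r) = y ^ (2*r+n-1) := by
            rw [← pow_add]; congr 1; omega
          calc y ^ (n-1) * (Real.sqrt (1 + y^2) ^ r * (φ (Real.sqrt (1 + y^2)))⁻¹) ^ 2
              = y ^ (n-1) * ((1 + y^2) ^ r * ((φ (Real.sqrt (1 + y^2)))⁻¹) ^ 2) := by rw [e1]
            _ ≤ y ^ (n-1) * ((2 ^ r * y ^ (2*r)) * ((c ^ m) ^ 2 * ((φ y)⁻¹) ^ 2)) := by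
                refine mul_le_mul_of_nonneg_left
                  (mul_le_mul e2 e3 (by positivity) (by positivity)) (by positivity)
            _ = K1 * (y ^ (n-1) * y ^ (2*r) * (φ y)⁻¹ ^ 2) := by rw [hK1]; ring
            _ = K1 * (y ^ (2*r+n-1) * (φ y)⁻¹ ^ 2) := by rw [e4]
      _ = ENNReal.ofReal K1 *
            ∫⁻ y in Ioi (1:ℝ), ENNReal.ofReal (y ^ (2*r+n-1) * (φ y)⁻¹ ^ 2) :=
          lintegral_const_mul' _ _ ENNReal.ofReal_ne_top
      _ ≤ ENNReal.ofReal K1 *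
            ∫⁻ y in Ici (1:ℝ), ENNReal.ofReal (y ^ (2*r+n-1) * (φ y)⁻¹ ^ 2) :=
          mul_le_mul_right (lintegral_mono_set Ioi_subset_Ici_self) _
      _ < ⊤ := ENNReal.mul_lt_top ENNReal.ofReal_lt_top hint

lemma holder_step (n : ℕ) (φ : ℝ → ℝ) (hmeas : Measurable φ)
    (hpos : ∀ t, 1 ≤ t → 0 < φ t) (r : ℕ)
    (g : EuclideanSpace ℝ (Fin n) → ℂ) (hg : Measurable g) (k : ℕ) (hk : k ≤ r) :
    (∫⁻ v, ENNReal.ofReal (‖v‖ ^ k * ‖g v‖)) ≤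
      (∫⁻ v : EuclideanSpace ℝ (Fin n),
          ENNReal.ofReal ((smod v ^ r * (φ (smod v))⁻¹) ^ 2)) ^ (1/2:ℝ) *
      (∫⁻ v, ENNReal.ofReal (φ (smod v) ^ 2 * ‖g v‖ ^ 2)) ^ (1/2:ℝ) := by
  set F : EuclideanSpace ℝ (Fin n) → ENNReal :=
    fun v => ENNReal.ofReal (smod v ^ r * (φ (smod v))⁻¹) with hF
  set G : EuclideanSpace ℝ (Fin n) → ENNReal :=
    fun v => ENNReal.ofReal (φ (smod v) * ‖g v‖) with hG
  have hFm : Measurable F :=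
    (((measurable_smod_s10).pow_const r).mul ((hmeas.comp measurable_smod_s10).inv)).ennreal_ofReal
  have hGm : Measurable G := ((hmeas.comp measurable_smod_s10).mul hg.norm).ennreal_ofReal
  have hpq : (2:ℝ).HolderConjugate 2 := Real.HolderConjugate.two_two
  have key := ENNReal.lintegral_mul_le_Lp_mul_Lq volume hpq hFm.aemeasurable hGm.aemeasurable
  have h1 : (∫⁻ v, ENNReal.ofReal (‖v‖ ^ k * ‖g v‖)) ≤ ∫⁻ v, (F * G) v := by
    refine lintegral_mono fun v => ?_
    have hφv : 0 < φ (smod v) := hpos _ (one_le_smod v)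
    have : (F * G) v = ENNReal.ofReal (smod v ^ r * ‖g v‖) := by
      simp only [Pi.mul_apply, hF, hG]
      rw [← ENNReal.ofReal_mul (mul_nonneg
        (pow_nonneg (le_trans zero_le_one (one_le_smod v)) r) (inv_nonneg.2 hφv.le))]
      congr 1
      field_simp
    rw [this]
    refine ENNReal.ofReal_le_ofReal ?_
    have h2 : ‖v‖ ^ k ≤ smod v ^ r :=
      le_trans (pow_le_pow_left₀ (norm_nonneg _) (norm_le_smod v) k)
        (pow_le_pow_right₀ (one_le_smod v) hk)
    exact mul_le_mul_of_nonneg_right h2 (norm_nonneg _)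
  have h3 : (∫⁻ v, F v ^ (2:ℝ)) =
      ∫⁻ v : EuclideanSpace ℝ (Fin n),
        ENNReal.ofReal ((smod v ^ r * (φ (smod v))⁻¹) ^ 2) := by
    refine lintegral_congr fun v => ?_
    simp only [hF]
    rw [show ((2:ℝ)) = ((2:ℕ):ℝ) by norm_num, ENNReal.rpow_natCast,
      ← ENNReal.ofReal_pow (mul_nonneg (pow_nonneg (le_trans zero_le_one (one_le_smod v)) r)
        (inv_nonneg.2 (hpos _ (one_le_smod v)).le))]
  have h4 : (∫⁻ v, G v ^ (2:ℝ)) = ∫⁻ v, ENNReal.ofReal (φ (smod v) ^ 2 * ‖g v‖ ^ 2) := by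
    refine lintegral_congr fun v => ?_
    have hφv : 0 < φ (smod v) := hpos _ (one_le_smod v)
    simp only [hG]
    rw [show ((2:ℝ)) = ((2:ℕ):ℝ) by norm_num, ENNReal.rpow_natCast,
      ← ENNReal.ofReal_pow (mul_nonneg hφv.le (norm_nonneg _)), mul_pow]
  calc (∫⁻ v, ENNReal.ofReal (‖v‖ ^ k * ‖g v‖)) ≤ ∫⁻ v, (F * G) v := h1
    _ ≤ (∫⁻ v, F v ^ (2:ℝ)) ^ (1/2:ℝ) * (∫⁻ v, G v ^ (2:ℝ)) ^ (1/2:ℝ) := key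
    _ = _ := by rw [h3, h4]

end Aux

open scoped FourierTransform RealInnerProductSpace

/-- if `∫₁^∞ t^{2r+n-1} φ(t)^{-2} dt < ∞`, then any measurable `g`
with finite `φ`-weighted `L²` integral is integrable, its inverse Fourier
integral `u(x) = ∫ e^{2πi x·ξ} g(ξ) dξ` is `C^r`, and all its derivatives of
order `≤ r` are bounded by `C·(∫ φ(⟨ξ⟩)²|g(ξ)|² dξ)^{1/2}` with `C` depending
only on `n`, `r` and `φ`. -/
theorem hoermander_embedding_Cr (n : ℕ) (hn : 1 ≤ n)
    (φ : ℝ → ℝ) (hφ : IsRO φ) (r : ℕ)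
    (hint : (∫⁻ t in Set.Ici (1 : ℝ),
        ENNReal.ofReal (t ^ (2 * r + n - 1) * (φ t)⁻¹ ^ 2)) < ⊤) :
    ∃ C > (0 : ℝ), ∀ g : EuclideanSpace ℝ (Fin n) → ℂ, Measurable g →
      (∫⁻ ξ, ENNReal.ofReal (φ (smod ξ) ^ 2 * ‖g ξ‖ ^ 2)) < ⊤ →
      Integrable g ∧
      (ContDiff ℝ (r : ℕ∞) fun x : EuclideanSpace ℝ (Fin n) =>
        ∫ ξ : EuclideanSpace ℝ (Fin n),
          Complex.exp (2 * Real.pi * Complex.I * (inner ℝ x ξ : ℝ)) * g ξ) ∧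
      ∀ k : ℕ, k ≤ r → ∀ x : EuclideanSpace ℝ (Fin n),
        ‖iteratedFDeriv ℝ k
            (fun y : EuclideanSpace ℝ (Fin n) =>
              ∫ ξ : EuclideanSpace ℝ (Fin n),
                Complex.exp (2 * Real.pi * Complex.I * (inner ℝ y ξ : ℝ)) * g ξ) x‖ ≤
          C * Real.sqrt
            ((∫⁻ ξ, ENNReal.ofReal (φ (smod ξ) ^ 2 * ‖g ξ‖ ^ 2)).toReal) := by
  obtain ⟨hmeas, hpos, a, ha, c, hc, hro⟩ := hφ
  have hlow := ro_lower ha hc hpos hro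
  have hB := key_finite n hn φ hmeas hpos a c ha hc hlow r hint
  set B := ∫⁻ ξ : EuclideanSpace ℝ (Fin n),
    ENNReal.ofReal ((smod ξ ^ r * (φ (smod ξ))⁻¹) ^ 2) with hBdef
  refine ⟨(2*Real.pi)^r * (Real.sqrt B.toReal + 1), by positivity, ?_⟩
  intro g hg hI
  set I := ∫⁻ ξ, ENNReal.ofReal (φ (smod ξ) ^ 2 * ‖g ξ‖ ^ 2) with hIdef
  have hmk : ∀ k : ℕ, Measurable fun v : EuclideanSpace ℝ (Fin n) => ‖v‖ ^ k * ‖g v‖ :=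
    fun k => (measurable_norm.pow_const k).mul hg.norm
  have hIntk : ∀ k : ℕ, k ≤ r →
      Integrable fun v : EuclideanSpace ℝ (Fin n) => ‖v‖ ^ k * ‖g v‖ := by
    intro k hk
    refine ⟨(hmk k).aestronglyMeasurable, ?_⟩
    rw [hasFiniteIntegral_iff_ofReal (Filter.Eventually.of_forall fun v => by positivity)]
    refine lt_of_le_of_lt (holder_step n φ hmeas hpos r g hg k hk) ?_
    exact ENNReal.mul_lt_top (ENNReal.rpow_lt_top_of_nonneg (by norm_num) hB.ne)
      (ENNReal.rpow_lt_top_of_nonneg (by norm_num) hI.ne)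
  have hgInt : Integrable g := by
    have h0 := hIntk 0 (Nat.zero_le r)
    simp only [pow_zero, one_mul] at h0
    exact (integrable_norm_iff hg.aestronglyMeasurable).1 h0
  have hIntBound : ∀ k : ℕ, k ≤ r →
      (∫ v : EuclideanSpace ℝ (Fin n), ‖v‖ ^ k * ‖g v‖) ≤
        Real.sqrt B.toReal * Real.sqrt I.toReal := by
    intro k hk
    rw [integral_eq_lintegral_of_nonneg_ae
      (Filter.Eventually.of_forall fun v => by positivity) (hmk k).aestronglyMeasurable]
    have hfin : ((B ^ (1/2:ℝ)) * (I ^ (1/2:ℝ))) ≠ ⊤ :=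
      (ENNReal.mul_lt_top (ENNReal.rpow_lt_top_of_nonneg (by norm_num) hB.ne)
        (ENNReal.rpow_lt_top_of_nonneg (by norm_num) hI.ne)).ne
    have hmono := ENNReal.toReal_mono hfin (holder_step n φ hmeas hpos r g hg k hk)
    refine le_trans hmono (le_of_eq ?_)
    rw [ENNReal.toReal_mul, Real.sqrt_eq_rpow, Real.sqrt_eq_rpow,
      ENNReal.toReal_rpow, ENNReal.toReal_rpow]
  set f : EuclideanSpace ℝ (Fin n) → ℂ := fun v => g (-v) with hfdef
  have hfm : Measurable f := hg.comp measurable_neg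
  have hfIntk : ∀ k : ℕ, k ≤ r →
      Integrable fun v : EuclideanSpace ℝ (Fin n) => ‖v‖ ^ k * ‖f v‖ := by
    intro k hk
    have heq : (fun v : EuclideanSpace ℝ (Fin n) => ‖v‖ ^ k * ‖f v‖)
        = (fun v : EuclideanSpace ℝ (Fin n) => ‖v‖ ^ k * ‖g v‖) ∘ (fun v => -v) := by
      funext v; simp [hfdef, norm_neg]
    rw [heq]
    exact ((Measure.measurePreserving_neg
      (volume : Measure (EuclideanSpace ℝ (Fin n)))).integrable_comp_emb
      (Homeomorph.neg (EuclideanSpace ℝ (Fin n))).measurableEmbedding).2 (hIntk k hk)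
  have hfIntk' : ∀ k : ℕ, (k:ℕ∞) ≤ (r:ℕ∞) →
      Integrable fun v : EuclideanSpace ℝ (Fin n) => ‖v‖ ^ k * ‖f v‖ :=
    fun k hk => hfIntk k (by exact_mod_cast hk)
  have hu : (fun x : EuclideanSpace ℝ (Fin n) =>
      ∫ ξ : EuclideanSpace ℝ (Fin n),
        Complex.exp (2 * Real.pi * Complex.I * (inner ℝ x ξ : ℝ)) * g ξ) = 𝓕 f := by
    funext x
    rw [Real.fourier_eq', ← integral_neg_eq_self]
    congr 1
    funext ξ
    simp only [hfdef, neg_neg, smul_eq_mul]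
    rw [show (inner ℝ x (-ξ) : ℝ) = -(inner ℝ ξ x : ℝ) by
      rw [inner_neg_right, real_inner_comm]]
    congr 1
    push_cast
    ring
  refine ⟨hgInt, ?_, ?_⟩
  · rw [hu]
    exact Real.contDiff_fourier hfIntk'
  · intro k hk x
    rw [hu, Real.iteratedFDeriv_fourier (N := (r:ℕ∞)) hfIntk'
      hfm.aestronglyMeasurable (by exact_mod_cast hk)]
    have hL : ‖innerSL ℝ (E := EuclideanSpace ℝ (Fin n))‖ ≤ 1 := norm_innerSL_le ℝ
    have hpi : (0:ℝ) < Real.pi := Real.pi_pos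
    calc ‖𝓕
          (fun v => VectorFourier.fourierPowSMulRight (innerSL ℝ) f v k) x‖
        ≤ ∫ v, ‖VectorFourier.fourierPowSMulRight (innerSL ℝ) f v k‖ :=
          VectorFourier.norm_fourierIntegral_le_integral_norm _ _ _ _ _
      _ ≤ ∫ v : EuclideanSpace ℝ (Fin n), (2*Real.pi)^k * (‖v‖ ^ k * ‖f v‖) := by
          refine integral_mono_of_nonneg
            (Filter.Eventually.of_forall fun v => norm_nonneg _)
            ((hfIntk k hk).const_mul _)
            (Filter.Eventually.of_forall fun v => ?_)
          refine le_trans (VectorFourier.norm_fourierPowSMulRight_le (innerSL ℝ) f v k) ?_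
          have h1 : (2 * Real.pi * ‖innerSL ℝ (E := EuclideanSpace ℝ (Fin n))‖) ^ k
              ≤ (2 * Real.pi) ^ k := by
            refine pow_le_pow_left₀ (by positivity) ?_ k
            nlinarith [Real.pi_gt_three]
          calc (2 * Real.pi * ‖innerSL ℝ (E := EuclideanSpace ℝ (Fin n))‖) ^ k
                * ‖v‖ ^ k * ‖f v‖
              ≤ (2 * Real.pi) ^ k * ‖v‖ ^ k * ‖f v‖ := by
                refine mul_le_mul_of_nonneg_right
                  (mul_le_mul_of_nonneg_right h1 (by positivity)) (norm_nonneg _)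
            _ = (2*Real.pi)^k * (‖v‖ ^ k * ‖f v‖) := by ring
      _ = (2*Real.pi)^k * ∫ v : EuclideanSpace ℝ (Fin n), ‖v‖ ^ k * ‖f v‖ :=
          integral_const_mul _ _
      _ = (2*Real.pi)^k * ∫ v : EuclideanSpace ℝ (Fin n), ‖v‖ ^ k * ‖g v‖ := by
          congr 1
          have := integral_neg_eq_self
            (fun v : EuclideanSpace ℝ (Fin n) => ‖v‖ ^ k * ‖g v‖)
            (volume : Measure (EuclideanSpace ℝ (Fin n)))
          simp only [norm_neg] at this
          exact this
      _ ≤ (2*Real.pi)^k * (Real.sqrt B.toReal * Real.sqrt I.toReal) :=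
          mul_le_mul_of_nonneg_left (hIntBound k hk) (by positivity)
      _ ≤ (2*Real.pi)^r * (Real.sqrt B.toReal + 1) * Real.sqrt I.toReal := by
          have h2 : (2*Real.pi)^k ≤ (2*Real.pi)^r :=
            pow_le_pow_right₀ (by nlinarith [Real.pi_gt_three]) hk
          have h3 := Real.sqrt_nonneg B.toReal
          have h4 := Real.sqrt_nonneg I.toReal
          calc (2*Real.pi)^k * (Real.sqrt B.toReal * Real.sqrt I.toReal)
              ≤ (2*Real.pi)^r * (Real.sqrt B.toReal * Real.sqrt I.toReal) :=
                mul_le_mul_of_nonneg_right h2 (by positivity)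
            _ ≤ (2*Real.pi)^r * ((Real.sqrt B.toReal + 1) * Real.sqrt I.toReal) := by
                refine mul_le_mul_of_nonneg_left ?_ (by positivity)
                exact mul_le_mul_of_nonneg_right (by linarith) h4
            _ = (2*Real.pi)^r * (Real.sqrt B.toReal + 1) * Real.sqrt I.toReal := by ring
end

section
/- Let φ : [1,∞) → (0,∞) be an RO-varying function with lower and upper Matuszewska indices σ₀(φ) and σ₁(φ), and let s₀, s₁ be real numbers with s₀ < σ₀(φ) and s₁ > σ₁(φ). Define ψ : [1,∞) → (0,∞) by ψ(t) := t^{-s₀/(s₁-s₀)} · φ( t^{1/(s₁-s₀)} ). Then ψ is pseudoconcave near infinity: there exist a concave function ψ₁ : [1,∞) → (0,∞) and a constant C ≥ 1 such that C⁻¹ · ψ₁(t) ≤ ψ(t) ≤ C · ψ₁(t) for all t ≥ 1. -/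
/-- Lower Matuszewska index `σ₀(φ)`. -/
noncomputable def sigma₀ (φ : ℝ → ℝ) : ℝ :=
  sSup {s₀ | ∃ c₀ > (0 : ℝ), ∀ t, 1 ≤ t → ∀ l, 1 ≤ l →
    c₀ * l ^ s₀ ≤ φ (l * t) / φ t}

/-- Upper Matuszewska index `σ₁(φ)`. -/
noncomputable def sigma₁ (φ : ℝ → ℝ) : ℝ :=
  sInf {s₁ | ∃ c₁ > (0 : ℝ), ∀ t, 1 ≤ t → ∀ l, 1 ≤ l →
    φ (l * t) / φ t ≤ c₁ * l ^ s₁}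


private lemma iter_bound (φ : ℝ → ℝ) (hpos : ∀ t, 1 ≤ t → 0 < φ t)
    (a c : ℝ) (ha : 1 < a) (hc : 1 ≤ c)
    (hRO : ∀ t, 1 ≤ t → ∀ l, 1 ≤ l → l ≤ a →
      c⁻¹ ≤ φ (l * t) / φ t ∧ φ (l * t) / φ t ≤ c) :
    ∀ n : ℕ, ∀ l, 1 ≤ l → l ≤ a ^ n → ∀ t, 1 ≤ t →
      (c ^ n)⁻¹ * φ t ≤ φ (l * t) ∧ φ (l * t) ≤ c ^ n * φ t := by
  have hc0 : (0:ℝ) < c := lt_of_lt_of_le one_pos hc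
  intro n
  induction n with
  | zero =>
    intro l hl1 hl2 t ht
    have : l = 1 := le_antisymm (by simpa using hl2) hl1
    subst this; simp
  | succ n ih =>
    intro l hl1 hl2 t ht
    have hφt : 0 < φ t := hpos t ht
    have hcn : (0:ℝ) < c ^ n := pow_pos hc0 n
    have hcsn : (0:ℝ) < c ^ (n+1) := pow_pos hc0 (n+1)
    have hmono : c ^ n ≤ c ^ (n+1) := pow_le_pow_right₀ hc (Nat.le_succ n)
    by_cases h : l ≤ a ^ n
    · obtain ⟨h1, h2⟩ := ih l hl1 h t ht
      constructor
      · calc (c ^ (n+1))⁻¹ * φ t ≤ (c ^ n)⁻¹ * φ t := by gcongr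
          _ ≤ φ (l * t) := h1
      · calc φ (l * t) ≤ c ^ n * φ t := h2
          _ ≤ c ^ (n+1) * φ t := by gcongr
    · push_neg at h
      have han : (1:ℝ) ≤ a ^ n := one_le_pow₀ ha.le
      have han0 : (0:ℝ) < a ^ n := lt_of_lt_of_le one_pos han
      set m := l / a ^ n with hm
      have hm1 : 1 ≤ m := (one_le_div han0).mpr h.le
      have hma : m ≤ a := by
        rw [hm, div_le_iff₀ han0]
        calc l ≤ a ^ (n+1) := hl2
          _ = a * a ^ n := by ring
      have hX : (1:ℝ) ≤ a ^ n * t := one_le_mul_of_one_le_of_one_le han ht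
      have hφX : 0 < φ (a ^ n * t) := hpos _ hX
      obtain ⟨hr1, hr2⟩ := hRO (a ^ n * t) hX m hm1 hma
      obtain ⟨hi1, hi2⟩ := ih (a ^ n) han le_rfl t ht
      have hrw : m * (a ^ n * t) = l * t := by
        rw [hm]; field_simp
      rw [hrw] at hr1 hr2
      constructor
      · have h1 : c⁻¹ * φ (a ^ n * t) ≤ φ (l * t) := by
          rw [le_div_iff₀ hφX] at hr1; linarith [hr1]
        calc (c ^ (n+1))⁻¹ * φ t = c⁻¹ * ((c ^ n)⁻¹ * φ t) := by
              rw [pow_succ, mul_inv_rev, mul_assoc]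
          _ ≤ c⁻¹ * φ (a ^ n * t) := by gcongr
          _ ≤ φ (l * t) := h1
      · have h2 : φ (l * t) ≤ c * φ (a ^ n * t) := by
          rw [div_le_iff₀ hφX] at hr2; linarith [hr2]
        calc φ (l * t) ≤ c * φ (a ^ n * t) := h2
          _ ≤ c * (c ^ n * φ t) := by gcongr
          _ = c ^ (n+1) * φ t := by ring

private lemma global_bound (φ : ℝ → ℝ) (hpos : ∀ t, 1 ≤ t → 0 < φ t)
    (a c : ℝ) (ha : 1 < a) (hc : 1 ≤ c)
    (hRO : ∀ t, 1 ≤ t → ∀ l, 1 ≤ l → l ≤ a →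
      c⁻¹ ≤ φ (l * t) / φ t ∧ φ (l * t) / φ t ≤ c) :
    ∀ l, 1 ≤ l → ∀ t, 1 ≤ t →
      (c * l ^ Real.logb a c)⁻¹ * φ t ≤ φ (l * t) ∧
        φ (l * t) ≤ (c * l ^ Real.logb a c) * φ t := by
  intro l hl t ht
  have hc0 : (0:ℝ) < c := lt_of_lt_of_le one_pos hc
  have ha0 : (0:ℝ) < a := lt_trans one_pos ha
  have hl0 : (0:ℝ) < l := lt_of_lt_of_le one_pos hl
  have hφt : 0 < φ t := hpos t ht
  set n : ℕ := ⌈Real.logb a l⌉₊ with hn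
  have hlog0 : 0 ≤ Real.logb a l := Real.logb_nonneg ha hl
  have hln : l ≤ a ^ n := by
    have h1 : l = a ^ Real.logb a l := (Real.rpow_logb ha0 (ne_of_gt ha) hl0).symm
    have h2 : a ^ Real.logb a l ≤ a ^ (n : ℝ) :=
      Real.rpow_le_rpow_of_exponent_le ha.le (Nat.le_ceil _)
    calc l = a ^ Real.logb a l := h1
      _ ≤ a ^ (n : ℝ) := h2
      _ = a ^ n := Real.rpow_natCast a n
  have hcn : c ^ n ≤ c * l ^ Real.logb a c := by
    have h1 : (n : ℝ) ≤ Real.logb a l + 1 := (Nat.ceil_lt_add_one hlog0).le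
    have h2 : c ^ Real.logb a l = l ^ Real.logb a c := by
      rw [Real.rpow_def_of_pos hc0, Real.rpow_def_of_pos hl0, Real.logb, Real.logb]
      congr 1; ring
    calc c ^ n = c ^ (n : ℝ) := (Real.rpow_natCast c n).symm
      _ ≤ c ^ (Real.logb a l + 1) := Real.rpow_le_rpow_of_exponent_le hc h1
      _ = c ^ Real.logb a l * c := by rw [Real.rpow_add hc0, Real.rpow_one]
      _ = c * l ^ Real.logb a c := by rw [h2]; ring
  have hcn0 : (0:ℝ) < c ^ n := pow_pos hc0 n
  have hclM0 : (0:ℝ) < c * l ^ Real.logb a c :=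
    lt_of_lt_of_le hcn0 hcn
  obtain ⟨h1, h2⟩ := iter_bound φ hpos a c ha hc hRO n l hl hln t ht
  constructor
  · calc (c * l ^ Real.logb a c)⁻¹ * φ t ≤ (c ^ n)⁻¹ * φ t := by gcongr
      _ ≤ φ (l * t) := h1
  · calc φ (l * t) ≤ c ^ n * φ t := h2
      _ ≤ (c * l ^ Real.logb a c) * φ t := by gcongr

private lemma exp_le_exp (φ : ℝ → ℝ) (_hpos : ∀ t, 1 ≤ t → 0 < φ t)
    (s s' c₀ c₁ : ℝ) (hc₀ : 0 < c₀) (hc₁ : 0 < c₁)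
    (hs : ∀ l : ℝ, 1 ≤ l → c₀ * l ^ s ≤ φ (l * 1) / φ 1)
    (hs' : ∀ l : ℝ, 1 ≤ l → φ (l * 1) / φ 1 ≤ c₁ * l ^ s') : s ≤ s' := by
  by_contra hlt
  push_neg at hlt
  set d := s - s' with hd
  have hd0 : 0 < d := sub_pos.mpr hlt
  set K := c₁ / c₀ with hK
  have hK0 : (0:ℝ) < K + 1 := by positivity
  set l := max 1 ((K + 1) ^ d⁻¹) with hldef
  have hl1 : (1:ℝ) ≤ l := le_max_left _ _
  have hl0 : (0:ℝ) < l := lt_of_lt_of_le one_pos hl1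
  have key : l ^ d ≤ K := by
    have h1 := le_trans (hs l hl1) (hs' l hl1)
    have h2 : l ^ s = l ^ s' * l ^ d := by
      rw [← Real.rpow_add hl0]; congr 1; ring
    rw [h2] at h1
    have hls' : (0:ℝ) < l ^ s' := Real.rpow_pos_of_pos hl0 s'
    rw [hK, le_div_iff₀ hc₀]
    nlinarith [h1]
  have key2 : K + 1 ≤ l ^ d := by
    have hb : (K + 1) ^ d⁻¹ ≤ l := le_max_right _ _
    have h3 : ((K + 1) ^ d⁻¹) ^ d ≤ l ^ d :=
      Real.rpow_le_rpow (by positivity) hb hd0.le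
    calc K + 1 = (K + 1) ^ (d⁻¹ * d) := by
          rw [inv_mul_cancel₀ (ne_of_gt hd0), Real.rpow_one]
      _ = ((K + 1) ^ d⁻¹) ^ d := Real.rpow_mul hK0.le _ _
      _ ≤ l ^ d := h3
  linarith

private lemma concave_majorant (ψ : ℝ → ℝ) (hψpos : ∀ t, 1 ≤ t → 0 < ψ t)
    (C0 : ℝ) (hC0 : 0 < C0)
    (hpc : ∀ t, 1 ≤ t → ∀ u, 1 ≤ u → ψ u ≤ C0 * (1 + u / t) * ψ t) :
    ∃ ψ₁ : ℝ → ℝ, ConcaveOn ℝ (Set.Ici (1 : ℝ)) ψ₁ ∧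
      (∀ t, 1 ≤ t → 0 < ψ₁ t) ∧
      ∃ C ≥ (1 : ℝ), ∀ t, 1 ≤ t → C⁻¹ * ψ₁ t ≤ ψ t ∧ ψ t ≤ C * ψ₁ t := by
  set T : Set (ℝ × ℝ) := {p | ∀ x, 1 ≤ x → ψ x ≤ p.1 * x + p.2} with hT
  set S : ℝ → Set ℝ := fun t => (fun p : ℝ × ℝ => p.1 * t + p.2) '' T with hS
  set g : ℝ → ℝ := fun t => sInf (S t) with hg
  have hψ1 : 0 < ψ 1 := hψpos 1 le_rfl
  have hTne : (2 * C0 * ψ 1, (0:ℝ)) ∈ T := by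
    intro x hx
    have h1 := hpc 1 le_rfl x hx
    have : (0:ℝ) < C0 * ψ 1 := by positivity
    simp only [div_one] at h1
    show ψ x ≤ 2 * C0 * ψ 1 * x + 0
    nlinarith [mul_le_mul_of_nonneg_left (by linarith : (1:ℝ) + x ≤ 2 * x) this.le]
  have hSne : ∀ t : ℝ, (S t).Nonempty := fun t => ⟨_, _, hTne, rfl⟩
  have hlb : ∀ t, 1 ≤ t → ∀ y ∈ S t, ψ t ≤ y := by
    rintro t ht y ⟨p, hp, rfl⟩
    exact hp t ht
  have hbdd : ∀ t, 1 ≤ t → BddBelow (S t) := fun t ht => ⟨ψ t, hlb t ht⟩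
  have hge : ∀ t, 1 ≤ t → ψ t ≤ g t := fun t ht => le_csInf (hSne t) (hlb t ht)
  have hle : ∀ t, 1 ≤ t → g t ≤ 2 * C0 * ψ t := by
    intro t ht
    have ht0 : (0:ℝ) < t := lt_of_lt_of_le one_pos ht
    have hψt : 0 < ψ t := hψpos t ht
    have hp : (C0 * ψ t / t, C0 * ψ t) ∈ T := by
      intro x hx
      have h1 := hpc t ht x hx
      have h2 : C0 * (1 + x / t) * ψ t = C0 * ψ t / t * x + C0 * ψ t := by
        field_simp; ring
      linarith [h2 ▸ h1]
    have hmem : C0 * ψ t / t * t + C0 * ψ t ∈ S t := ⟨_, hp, rfl⟩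
    have := csInf_le (hbdd t ht) hmem
    have heq : C0 * ψ t / t * t + C0 * ψ t = 2 * C0 * ψ t := by
      field_simp; ring
    linarith [heq ▸ this]
  have hconc : ConcaveOn ℝ (Set.Ici (1 : ℝ)) g := by
    refine ⟨convex_Ici 1, ?_⟩
    intro x hx y hy p q hp hq hpq
    simp only [smul_eq_mul]
    refine le_csInf (hSne _) ?_
    rintro z ⟨r, hr, rfl⟩
    have h1 : g x ≤ r.1 * x + r.2 := csInf_le (hbdd x hx) ⟨r, hr, rfl⟩
    have h2 : g y ≤ r.1 * y + r.2 := csInf_le (hbdd y hy) ⟨r, hr, rfl⟩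
    show p * g x + q * g y ≤ r.1 * (p * x + q * y) + r.2
    have heq : r.1 * (p * x + q * y) + r.2
        = p * (r.1 * x + r.2) + q * (r.1 * y + r.2) := by
      linear_combination (-r.2) * hpq
    rw [heq]
    have hA : p * g x ≤ p * (r.1 * x + r.2) := mul_le_mul_of_nonneg_left h1 hp
    have hB : q * g y ≤ q * (r.1 * y + r.2) := mul_le_mul_of_nonneg_left h2 hq
    linarith
  refine ⟨g, hconc, fun t ht => lt_of_lt_of_le (hψpos t ht) (hge t ht),
    2 * C0 + 1, by linarith, fun t ht => ?_⟩
  have hψt : 0 < ψ t := hψpos t ht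
  have hgt : 0 < g t := lt_of_lt_of_le hψt (hge t ht)
  have hC : (0:ℝ) < 2 * C0 + 1 := by linarith
  constructor
  · rw [inv_mul_le_iff₀ hC]
    calc g t ≤ 2 * C0 * ψ t := hle t ht
      _ ≤ (2 * C0 + 1) * ψ t := by nlinarith
  · calc ψ t ≤ g t := hge t ht
      _ ≤ (2 * C0 + 1) * g t := by nlinarith

/-- for `s₀ < σ₀(φ)` and `s₁ > σ₁(φ)`, the interpolation parameter
`ψ(t) = t^{-s₀/(s₁-s₀)} φ(t^{1/(s₁-s₀)})` is pseudoconcave near infinity: it is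
equivalent on `[1,∞)` to a positive concave function. -/
theorem interpolation_parameter_pseudoconcave (φ : ℝ → ℝ) (hφ : IsRO φ)
    (s₀ s₁ : ℝ) (h₀ : s₀ < sigma₀ φ) (h₁ : sigma₁ φ < s₁)
    (ψ : ℝ → ℝ)
    (hψ : ∀ t, 1 ≤ t → ψ t = t ^ (-s₀ / (s₁ - s₀)) * φ (t ^ (1 / (s₁ - s₀)))) :
    ∃ ψ₁ : ℝ → ℝ, ConcaveOn ℝ (Set.Ici (1 : ℝ)) ψ₁ ∧
      (∀ t, 1 ≤ t → 0 < ψ₁ t) ∧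
      ∃ C ≥ (1 : ℝ), ∀ t, 1 ≤ t → C⁻¹ * ψ₁ t ≤ ψ t ∧ ψ t ≤ C * ψ₁ t := by
  obtain ⟨hmeas, hpos, a, ha, c, hc, hRO⟩ := hφ
  have hc0 : (0:ℝ) < c := lt_of_lt_of_le one_pos hc
  set M := Real.logb a c with hM
  set S₀ : Set ℝ := {s₀ | ∃ c₀ > (0 : ℝ), ∀ t, 1 ≤ t → ∀ l, 1 ≤ l →
    c₀ * l ^ s₀ ≤ φ (l * t) / φ t} with hS₀
  set S₁ : Set ℝ := {s₁ | ∃ c₁ > (0 : ℝ), ∀ t, 1 ≤ t → ∀ l, 1 ≤ l →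
    φ (l * t) / φ t ≤ c₁ * l ^ s₁} with hS₁
  have hM1 : M ∈ S₁ := by
    refine ⟨c, hc0, fun t ht l hl => ?_⟩
    have h2 := (global_bound φ hpos a c ha hc hRO l hl t ht).2
    rw [div_le_iff₀ (hpos t ht)]
    linarith [h2]
  have hM0 : -M ∈ S₀ := by
    refine ⟨c⁻¹, by positivity, fun t ht l hl => ?_⟩
    have hl0 : (0:ℝ) < l := lt_of_lt_of_le one_pos hl
    have h1 := (global_bound φ hpos a c ha hc hRO l hl t ht).1
    rw [le_div_iff₀ (hpos t ht)]
    have heq : c⁻¹ * l ^ (-M) = (c * l ^ M)⁻¹ := by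
      rw [Real.rpow_neg hl0.le, mul_inv]
    rw [heq]
    exact h1
  have hbddA : BddAbove S₀ := by
    refine ⟨M, fun s hs => ?_⟩
    obtain ⟨c₀', hc₀', hsb⟩ := hs
    obtain ⟨c₁', hc₁', hM1b⟩ := hM1
    exact exp_le_exp φ hpos s M c₀' c₁' hc₀' hc₁'
      (fun l hl => hsb 1 le_rfl l hl) (fun l hl => hM1b 1 le_rfl l hl)
  have hbddB : BddBelow S₁ := by
    refine ⟨-M, fun s' hs' => ?_⟩
    obtain ⟨c₁', hc₁', hsb⟩ := hs'
    obtain ⟨c₀', hc₀', hM0b⟩ := hM0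
    exact exp_le_exp φ hpos (-M) s' c₀' c₁' hc₀' hc₁'
      (fun l hl => hM0b 1 le_rfl l hl) (fun l hl => hsb 1 le_rfl l hl)
  have h₀' : s₀ < sSup S₀ := h₀
  have h₁' : sInf S₁ < s₁ := h₁
  obtain ⟨s, hsmem, hs₀s⟩ := (lt_csSup_iff hbddA ⟨-M, hM0⟩).mp h₀'
  obtain ⟨s', hs'mem, hs's₁⟩ := (csInf_lt_iff hbddB ⟨M, hM1⟩).mp h₁'
  obtain ⟨c₀, hc₀, hlow⟩ := hsmem
  obtain ⟨c₁, hc₁, hup⟩ := hs'mem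
  have hss' : s ≤ s' := exp_le_exp φ hpos s s' c₀ c₁ hc₀ hc₁
    (fun l hl => hlow 1 le_rfl l hl) (fun l hl => hup 1 le_rfl l hl)
  have hD : 0 < s₁ - s₀ := by linarith
  have hβ0 : 0 < 1 / (s₁ - s₀) := by positivity
  have hψpos : ∀ t, 1 ≤ t → 0 < ψ t := by
    intro t ht
    have ht0 : (0:ℝ) < t := lt_of_lt_of_le one_pos ht
    rw [hψ t ht]
    have h1 : 1 ≤ t ^ (1 / (s₁ - s₀)) := Real.one_le_rpow ht hβ0.le
    exact mul_pos (Real.rpow_pos_of_pos ht0 _) (hpos _ h1)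
  have key : ∀ t, 1 ≤ t → ∀ l, 1 ≤ l →
      c₀ * ψ t ≤ ψ (l * t) ∧ ψ (l * t) ≤ c₁ * l * ψ t := by
    intro t ht l hl
    have ht0 : (0:ℝ) < t := lt_of_lt_of_le one_pos ht
    have hl0 : (0:ℝ) < l := lt_of_lt_of_le one_pos hl
    have hlt1 : (1:ℝ) ≤ l * t := one_le_mul_of_one_le_of_one_le hl ht
    have htβ : 1 ≤ t ^ (1 / (s₁ - s₀)) := Real.one_le_rpow ht hβ0.le
    have hlβ : 1 ≤ l ^ (1 / (s₁ - s₀)) := Real.one_le_rpow hl hβ0.le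
    have hφtβ : 0 < φ (t ^ (1 / (s₁ - s₀))) := hpos _ htβ
    have hla0 : (0:ℝ) < l ^ (-s₀ / (s₁ - s₀)) := Real.rpow_pos_of_pos hl0 _
    have hta0 : (0:ℝ) < t ^ (-s₀ / (s₁ - s₀)) := Real.rpow_pos_of_pos ht0 _
    rw [hψ (l * t) hlt1, hψ t ht]
    have hmulβ : (l * t) ^ (1 / (s₁ - s₀))
        = l ^ (1 / (s₁ - s₀)) * t ^ (1 / (s₁ - s₀)) :=
      Real.mul_rpow hl0.le ht0.le
    have hmula : (l * t) ^ (-s₀ / (s₁ - s₀))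
        = l ^ (-s₀ / (s₁ - s₀)) * t ^ (-s₀ / (s₁ - s₀)) :=
      Real.mul_rpow hl0.le ht0.le
    rw [hmulβ, hmula]
    have hrwup : (l ^ (1 / (s₁ - s₀))) ^ s' = l ^ (1 / (s₁ - s₀) * s') :=
      (Real.rpow_mul hl0.le _ _).symm
    have hrwlo : (l ^ (1 / (s₁ - s₀))) ^ s = l ^ (1 / (s₁ - s₀) * s) :=
      (Real.rpow_mul hl0.le _ _).symm
    constructor
    · -- lower bound
      have h1 := hlow (t ^ (1 / (s₁ - s₀))) htβ (l ^ (1 / (s₁ - s₀))) hlβ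
      rw [le_div_iff₀ hφtβ, hrwlo] at h1
      have hexp : (1:ℝ) ≤ l ^ (-s₀ / (s₁ - s₀)) * l ^ (1 / (s₁ - s₀) * s) := by
        rw [← Real.rpow_add hl0]
        refine Real.one_le_rpow hl ?_
        have : -s₀ / (s₁ - s₀) + 1 / (s₁ - s₀) * s = (s - s₀) / (s₁ - s₀) := by
          ring
        rw [this]
        apply div_nonneg <;> linarith
      calc c₀ * (t ^ (-s₀ / (s₁ - s₀)) * φ (t ^ (1 / (s₁ - s₀))))
          = 1 * (c₀ * (t ^ (-s₀ / (s₁ - s₀)) * φ (t ^ (1 / (s₁ - s₀))))) := by ring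
        _ ≤ (l ^ (-s₀ / (s₁ - s₀)) * l ^ (1 / (s₁ - s₀) * s)) *
            (c₀ * (t ^ (-s₀ / (s₁ - s₀)) * φ (t ^ (1 / (s₁ - s₀))))) := by
            gcongr
        _ = l ^ (-s₀ / (s₁ - s₀)) * t ^ (-s₀ / (s₁ - s₀)) *
            (c₀ * l ^ (1 / (s₁ - s₀) * s) * φ (t ^ (1 / (s₁ - s₀)))) := by ring
        _ ≤ l ^ (-s₀ / (s₁ - s₀)) * t ^ (-s₀ / (s₁ - s₀)) *
            φ (l ^ (1 / (s₁ - s₀)) * t ^ (1 / (s₁ - s₀))) := by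
            gcongr
    · -- upper bound
      have h2 := hup (t ^ (1 / (s₁ - s₀))) htβ (l ^ (1 / (s₁ - s₀))) hlβ
      rw [div_le_iff₀ hφtβ, hrwup] at h2
      have hll : l ^ (-s₀ / (s₁ - s₀)) * l ^ (1 / (s₁ - s₀) * s') ≤ l := by
        rw [← Real.rpow_add hl0]
        calc l ^ (-s₀ / (s₁ - s₀) + 1 / (s₁ - s₀) * s')
            ≤ l ^ (1:ℝ) := by
              refine Real.rpow_le_rpow_of_exponent_le hl ?_
              have : -s₀ / (s₁ - s₀) + 1 / (s₁ - s₀) * s' = (s' - s₀) / (s₁ - s₀) := by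
                ring
              rw [this, div_le_one hD]
              linarith
          _ = l := Real.rpow_one l
      calc l ^ (-s₀ / (s₁ - s₀)) * t ^ (-s₀ / (s₁ - s₀)) *
            φ (l ^ (1 / (s₁ - s₀)) * t ^ (1 / (s₁ - s₀)))
          ≤ l ^ (-s₀ / (s₁ - s₀)) * t ^ (-s₀ / (s₁ - s₀)) *
            (c₁ * l ^ (1 / (s₁ - s₀) * s') * φ (t ^ (1 / (s₁ - s₀)))) := by
            gcongr
        _ = c₁ * (l ^ (-s₀ / (s₁ - s₀)) * l ^ (1 / (s₁ - s₀) * s')) *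
            (t ^ (-s₀ / (s₁ - s₀)) * φ (t ^ (1 / (s₁ - s₀)))) := by ring
        _ ≤ c₁ * l * (t ^ (-s₀ / (s₁ - s₀)) * φ (t ^ (1 / (s₁ - s₀)))) := by
            gcongr
  set C0 : ℝ := max c₁ c₀⁻¹ with hC0def
  have hC0 : 0 < C0 := lt_max_of_lt_left hc₁
  have hpc : ∀ t, 1 ≤ t → ∀ u, 1 ≤ u → ψ u ≤ C0 * (1 + u / t) * ψ t := by
    intro t ht u hu
    have ht0 : (0:ℝ) < t := lt_of_lt_of_le one_pos ht
    have hu0 : (0:ℝ) < u := lt_of_lt_of_le one_pos hu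
    have hψt : 0 < ψ t := hψpos t ht
    have hut0 : (0:ℝ) < u / t := by positivity
    rcases le_total t u with h | h
    · have hl : (1:ℝ) ≤ u / t := (one_le_div ht0).mpr h
      have heq : u / t * t = u := div_mul_cancel₀ u (ne_of_gt ht0)
      have h2 := (key t ht (u / t) hl).2
      rw [heq] at h2
      have hc₁C : c₁ ≤ C0 := le_max_left _ _
      calc ψ u ≤ c₁ * (u / t) * ψ t := h2
        _ ≤ C0 * (1 + u / t) * ψ t := by
            have : c₁ * (u / t) ≤ C0 * (1 + u / t) := by nlinarith
            nlinarith
    · have hl : (1:ℝ) ≤ t / u := (one_le_div hu0).mpr h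
      have heq : t / u * u = t := div_mul_cancel₀ t (ne_of_gt hu0)
      have h1 := (key u hu (t / u) hl).1
      rw [heq] at h1
      have hcC : c₀⁻¹ ≤ C0 := le_max_right _ _
      have h3 : ψ u ≤ c₀⁻¹ * ψ t := by
        rw [inv_mul_eq_div, le_div_iff₀ hc₀]
        nlinarith [h1]
      calc ψ u ≤ c₀⁻¹ * ψ t := h3
        _ ≤ C0 * (1 + u / t) * ψ t := by
            nlinarith [mul_le_mul_of_nonneg_right hcC hψt.le,
              mul_nonneg (mul_pos hC0 hut0).le hψt.le]
  exact concave_majorant ψ hψpos C0 hC0 hpc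
end
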